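/- arXiv:1603.05155 — 5 statements merged into one kernel-verified Lean document; each statement's English description precedes it below -/
import Mathlib

section
/- (Euler's sum formula in depth two) For every integer n ≥ 3, ∑_{a=1}^{n-2} ζ(a, n-a) = ζ(n), where ζ(a,b) = ∑_{0<k₁<k₂} k₁^{-a} k₂^{-b}. -/
open Finset Filter Topology

/-- Telescoping series `∑_y (1/(c+y+1) - 1/(c+y+2)) = 1/(c+1)`. -/
lemma tele_hasSum (c : ℝ) (hc : 0 ≤ c) :
    HasSum (fun y : ℕ => 1/(c+y+1) - 1/(c+y+2)) (1/(c+1)) := by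
  have hnn : ∀ y : ℕ, 0 ≤ 1/(c+(y:ℝ)+1) - 1/(c+(y:ℝ)+2) := by
    intro y
    have h1 : (0:ℝ) < c+(y:ℝ)+1 := by positivity
    have h2 : c+(y:ℝ)+1 ≤ c+(y:ℝ)+2 := by linarith
    have := one_div_le_one_div_of_le h1 h2
    linarith
  rw [hasSum_iff_tendsto_nat_of_nonneg hnn]
  have hps : ∀ N : ℕ, ∑ y ∈ range N, (1/(c+(y:ℝ)+1) - 1/(c+(y:ℝ)+2))
      = 1/(c+1) - 1/(c+(N:ℝ)+1) := by
    intro N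
    induction N with
    | zero => simp
    | succ N ih =>
      rw [Finset.sum_range_succ, ih]
      push_cast
      ring
  have hlim : Tendsto (fun N : ℕ => 1/(c+(N:ℝ)+1)) atTop (𝓝 0) := by
    have h1 : Tendsto (fun N : ℕ => c+(N:ℝ)+1) atTop atTop := by
      apply tendsto_atTop_add_const_right
      apply tendsto_atTop_add_const_left
      exact tendsto_natCast_atTop_atTop
    simpa [one_div, Function.comp_def] using tendsto_inv_atTop_zero.comp h1
  have : Tendsto (fun N : ℕ => 1/(c+1) - 1/(c+(N:ℝ)+1)) atTop (𝓝 (1/(c+1))) := by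
    simpa using (tendsto_const_nhds (x := 1/(c+1)) (f := atTop)).sub hlim
  exact this.congr fun N => (hps N).symm

/-- Shifted p-series summability. -/
lemma summable_shift (c : ℕ) {k : ℕ} (hk : 2 ≤ k) :
    Summable (fun y : ℕ => 1/((y:ℝ)+(c:ℝ)+1)^k) := by
  have h : Summable (fun m : ℕ => 1/((m:ℝ))^k) :=
    Real.summable_one_div_nat_pow.mpr (by omega)
  have h2 := (summable_nat_add_iff (c+1)).mpr h
  refine h2.congr fun y => ?_
  push_cast
  ring_nf

lemma base_summable :
    Summable (fun p : ℕ × ℕ => 1/(((p.1:ℝ)+1) * (((p.1:ℝ)+(p.2:ℝ)+2)^2))) := by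
  have hnn : 0 ≤ fun p : ℕ × ℕ => 1/(((p.1:ℝ)+1) * (((p.1:ℝ)+(p.2:ℝ)+2)^2)) := by
    intro p; positivity
  rw [summable_prod_of_nonneg hnn]
  have hslice : ∀ x : ℕ, Summable (fun y : ℕ => 1/(((x:ℝ)+1) * (((x:ℝ)+(y:ℝ)+2)^2))) := by
    intro x
    have := (summable_shift (x+1) (le_refl 2)).mul_left (1/((x:ℝ)+1))
    refine this.congr fun y => ?_
    push_cast
    rw [div_mul_div_comm, one_mul]
    ring_nf
  refine ⟨hslice, ?_⟩
  have hzeta : Summable (fun x : ℕ => 1/((x:ℝ)+1)^2) := by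
    have := summable_shift 0 (le_refl 2)
    simpa using this
  refine Summable.of_nonneg_of_le (fun x => tsum_nonneg fun y => by positivity) (fun x => ?_) hzeta
  have htele := tele_hasSum ((x:ℝ)) (by positivity)
  have hteleS : Summable (fun y : ℕ => 1/((x:ℝ)+(y:ℝ)+1) - 1/((x:ℝ)+(y:ℝ)+2)) := htele.summable
  have hbound : ∀ y : ℕ, 1/(((x:ℝ)+1) * (((x:ℝ)+(y:ℝ)+2)^2))
      ≤ (1/((x:ℝ)+1)) * (1/((x:ℝ)+(y:ℝ)+1) - 1/((x:ℝ)+(y:ℝ)+2)) := by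
    intro y
    have hd : 1/((x:ℝ)+(y:ℝ)+1) - 1/((x:ℝ)+(y:ℝ)+2)
        = 1/(((x:ℝ)+(y:ℝ)+1) * ((x:ℝ)+(y:ℝ)+2)) := by
      rw [div_sub_div _ _ (by positivity) (by positivity)]
      congr 1
      ring
    rw [hd, div_mul_div_comm, one_mul]
    apply one_div_le_one_div_of_le
    · positivity
    · nlinarith [sq_nonneg ((x:ℝ)+(y:ℝ)+2)]
  calc ∑' y : ℕ, 1/(((x:ℝ)+1) * (((x:ℝ)+(y:ℝ)+2)^2))
      ≤ ∑' y : ℕ, (1/((x:ℝ)+1)) * (1/((x:ℝ)+(y:ℝ)+1) - 1/((x:ℝ)+(y:ℝ)+2)) :=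
        Summable.tsum_le_tsum hbound (hslice x) (hteleS.mul_left _)
    _ = (1/((x:ℝ)+1)) * (1/((x:ℝ)+1)) := by
        rw [tsum_mul_left, htele.tsum_eq]
    _ = 1/((x:ℝ)+1)^2 := by
        rw [div_mul_div_comm, one_mul, sq]

/-- Summability of double zeta terms for `a ≥ 1`, `b ≥ 2`. -/
lemma dz_summable {a b : ℕ} (ha : 1 ≤ a) (hb : 2 ≤ b) :
    Summable (fun p : ℕ × ℕ => 1 / (((p.1 : ℝ) + 1) ^ a * ((p.1 : ℝ) + (p.2 : ℝ) + 2) ^ b)) := by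
  refine Summable.of_nonneg_of_le (fun p => by positivity) (fun p => ?_) base_summable
  set J : ℝ := (p.1:ℝ)+1 with hJ
  set K : ℝ := (p.1:ℝ)+(p.2:ℝ)+2 with hK
  have hJ1 : (1:ℝ) ≤ J := by rw [hJ]; have := Nat.cast_nonneg (α := ℝ) p.1; linarith
  have hK1 : (1:ℝ) ≤ K := by rw [hK]; have := Nat.cast_nonneg (α := ℝ) p.1; have := Nat.cast_nonneg (α := ℝ) p.2; linarith
  apply one_div_le_one_div_of_le
  · positivity
  · have h1 : J ≤ J ^ a := le_self_pow₀ (by linarith) (by omega)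
    have h2 : K ^ 2 ≤ K ^ b := pow_le_pow_right₀ (by linarith) hb
    have : (0:ℝ) < K ^ 2 := by positivity
    nlinarith [pow_nonneg (le_trans zero_le_one hJ1) a, pow_nonneg (le_trans zero_le_one hK1) b]

/-- `∑_y (1/(y+1) - 1/(x+y+2)) = H_{x+1}` (harmonic number). -/
lemma inner_hasSum (x : ℕ) :
    HasSum (fun y : ℕ => 1/((y:ℝ)+1) - 1/((x:ℝ)+(y:ℝ)+2))
      (∑ i ∈ range (x+1), 1/((i:ℝ)+1)) := by
  have h : ∀ y : ℕ, 1/((y:ℝ)+1) - 1/((x:ℝ)+(y:ℝ)+2)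
      = ∑ i ∈ range (x+1), (1/((i:ℝ)+(y:ℝ)+1) - 1/((i:ℝ)+(y:ℝ)+2)) := by
    intro y
    have h0 := Finset.sum_range_sub' (fun i : ℕ => 1/((i:ℝ)+(y:ℝ)+1)) (x+1)
    have h1 : ∑ i ∈ range (x+1), (1/((i:ℝ)+(y:ℝ)+1) - 1/((i:ℝ)+(y:ℝ)+2))
        = ∑ i ∈ range (x+1), (1/((i:ℝ)+(y:ℝ)+1) - 1/(((i+1:ℕ):ℝ)+(y:ℝ)+1)) := by
      refine Finset.sum_congr rfl fun i _ => ?_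
      push_cast
      ring_nf
    rw [h1, h0]
    push_cast
    ring_nf
  have H := hasSum_sum (s := range (x+1))
    (f := fun (i : ℕ) (y : ℕ) => 1/((i:ℝ)+(y:ℝ)+1) - 1/((i:ℝ)+(y:ℝ)+2))
    (a := fun (i : ℕ) => 1/((i:ℝ)+1))
    (fun i _ => by
      have := tele_hasSum ((i:ℝ)) (Nat.cast_nonneg i)
      exact this.congr_fun fun y => by ring_nf)
  rw [show (fun y : ℕ => 1/((y:ℝ)+1) - 1/((x:ℝ)+(y:ℝ)+2))
      = (fun y : ℕ => ∑ i ∈ range (x+1), (1/((i:ℝ)+(y:ℝ)+1) - 1/((i:ℝ)+(y:ℝ)+2))) from funext h]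
  exact H

/-- The partial fraction / geometric sum identity for fixed indices. -/
lemma key_identity (n : ℕ) (hn : 3 ≤ n) (x y : ℕ) :
    ∑ a ∈ Finset.Icc 1 (n-2), 1 / (((x:ℝ)+1)^a * ((x:ℝ)+(y:ℝ)+2)^(n-a))
      = 1/((x:ℝ)+1)^(n-1) * (1/((y:ℝ)+1) - 1/((x:ℝ)+(y:ℝ)+2))
        - 1/(((y:ℝ)+1) * ((x:ℝ)+(y:ℝ)+2)^(n-1)) := by
  set J : ℝ := (x:ℝ)+1 with hJdef
  set M : ℝ := (y:ℝ)+1 with hMdef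
  set K : ℝ := (x:ℝ)+(y:ℝ)+2 with hKdef
  have hJ : (0:ℝ) < J := by rw [hJdef]; positivity
  have hM : (0:ℝ) < M := by rw [hMdef]; positivity
  have hK : (0:ℝ) < K := by rw [hKdef]; positivity
  have hKJM : K = J + M := by rw [hKdef, hJdef, hMdef]; ring
  have hJK : J < K := by rw [hKJM]; linarith
  set q : ℕ := n - 2 with hqdef
  have hq : 1 ≤ q := by omega
  have hn1 : n - 1 = q + 1 := by omega
  set u : ℝ := 1/J with hudef
  set v : ℝ := 1/K with hvdef
  have hvu : v < u := by
    rw [hudef, hvdef]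
    exact one_div_lt_one_div_of_lt hJ hJK
  have hD : u - v ≠ 0 := sub_ne_zero.mpr (ne_of_gt hvu)
  -- LHS * (u - v) = u * v^2 * (u^q - v^q)
  have hL : (∑ a ∈ Finset.Icc 1 (n-2), 1 / (J^a * K^(n-a))) * (u - v)
      = u * v^2 * (u^q - v^q) := by
    have e1 : ∑ a ∈ Finset.Icc 1 (n-2), 1 / (J^a * K^(n-a))
        = ∑ i ∈ range q, u^(1+i) * v^(q+1-i) := by
      rw [← Finset.Ico_add_one_right_eq_Icc, Finset.sum_Ico_eq_sum_range]
      refine Finset.sum_congr rfl fun i hi => ?_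
      rw [Finset.mem_range] at hi
      have hni : n - (1+i) = q+1-i := by omega
      rw [hni, hudef, hvdef, div_pow, div_pow, div_mul_div_comm, one_pow, one_pow, one_mul]
    have e2 : ∑ i ∈ range q, u^(1+i) * v^(q+1-i)
        = (u * v^2) * ∑ i ∈ range q, u^i * v^(q-1-i) := by
      rw [Finset.mul_sum]
      refine Finset.sum_congr rfl fun i hi => ?_
      rw [Finset.mem_range] at hi
      have : q+1-i = (q-1-i)+2 := by omega
      rw [this, pow_add, pow_add, pow_one]
      ring
    rw [e1, e2, mul_assoc, geom_sum₂_mul]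
  -- RHS * (u - v) = u * v^2 * (u^q - v^q)
  have hR : (1/J^(n-1) * (1/M - 1/K) - 1/(M * K^(n-1))) * (u - v)
      = u * v^2 * (u^q - v^q) := by
    rw [hn1, hudef, hvdef, hKJM]
    have hJM : J + M ≠ 0 := by linarith
    simp only [div_pow, one_pow]
    field_simp
    ring
  have := hL.trans hR.symm
  exact mul_right_cancel₀ hD this



/-- `ζ(a) = ∑_{n ≥ 1} n^{-a}`. -/
noncomputable def zetaVal (a : ℕ) : ℝ := ∑' n : ℕ, 1 / ((n : ℝ) + 1) ^ a

/-- The double zeta value `ζ(a,b) = ∑_{0<k₁<k₂} k₁^{-a} k₂^{-b}`. -/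
noncomputable def doubleZeta (a b : ℕ) : ℝ :=
  ∑' p : ℕ × ℕ, 1 / (((p.1 : ℝ) + 1) ^ a * ((p.1 : ℝ) + (p.2 : ℝ) + 2) ^ b)

/-- Euler's sum formula in depth two: `∑_{a=1}^{n-2} ζ(a, n-a) = ζ(n)`. -/
theorem euler_sum_formula_depth_two (n : ℕ) (hn : 3 ≤ n) :
    ∑ a ∈ Finset.Icc 1 (n - 2), doubleZeta a (n - a) = zetaVal n := by
  have hn1 : 2 ≤ n - 1 := by omega
  have hsumm : ∀ a ∈ Finset.Icc 1 (n-2), Summable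
      (fun p : ℕ×ℕ => 1 / (((p.1:ℝ)+1)^a * ((p.1:ℝ)+(p.2:ℝ)+2)^(n-a))) := by
    intro a ha
    rw [Finset.mem_Icc] at ha
    exact dz_summable ha.1 (by omega)
  set A : ℕ×ℕ → ℝ :=
    fun p => 1/((p.1:ℝ)+1)^(n-1) * (1/((p.2:ℝ)+1) - 1/((p.1:ℝ)+(p.2:ℝ)+2)) with hAdef
  set B : ℕ×ℕ → ℝ :=
    fun p => 1/(((p.2:ℝ)+1) * ((p.1:ℝ)+(p.2:ℝ)+2)^(n-1)) with hBdef
  have hkey : ∀ p : ℕ×ℕ,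
      ∑ a ∈ Finset.Icc 1 (n-2), 1 / (((p.1:ℝ)+1)^a * ((p.1:ℝ)+(p.2:ℝ)+2)^(n-a)) = A p - B p :=
    fun p => key_identity n hn p.1 p.2
  have hdz1 : Summable (fun p : ℕ×ℕ => 1 / (((p.1:ℝ)+1)^1 * ((p.1:ℝ)+(p.2:ℝ)+2)^(n-1))) :=
    dz_summable le_rfl hn1
  have hB : Summable B := by
    have h := (Equiv.prodComm ℕ ℕ).summable_iff.mpr hdz1
    refine h.congr fun p => ?_
    simp only [Function.comp_apply, Equiv.prodComm_apply, Prod.fst_swap, Prod.snd_swap, hBdef,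
      pow_one]
    ring_nf
  have hF : Summable (fun p : ℕ×ℕ =>
      ∑ a ∈ Finset.Icc 1 (n-2), 1 / (((p.1:ℝ)+1)^a * ((p.1:ℝ)+(p.2:ℝ)+2)^(n-a))) :=
    summable_sum hsumm
  have hA : Summable A := by
    refine (hF.add hB).congr fun p => ?_
    rw [hkey p]
    ring
  have hBval : (∑' p : ℕ×ℕ, B p) = doubleZeta 1 (n-1) := by
    rw [doubleZeta, ← (Equiv.prodComm ℕ ℕ).tsum_eq]
    refine tsum_congr fun p => ?_
    simp only [Equiv.prodComm_apply, Prod.fst_swap, Prod.snd_swap, hBdef, pow_one]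
    ring_nf
  have hA0 : 0 ≤ A := by
    intro p
    have h1 : 1/((p.1:ℝ)+(p.2:ℝ)+2) ≤ 1/((p.2:ℝ)+1) := by
      apply one_div_le_one_div_of_le
      · positivity
      · have := Nat.cast_nonneg (α := ℝ) p.1
        linarith
    have h2 : (0:ℝ) ≤ 1/((p.1:ℝ)+1)^(n-1) := by positivity
    simp only [hAdef]
    exact mul_nonneg h2 (by linarith)
  have hpair := (summable_prod_of_nonneg hA0).mp hA
  have hAval : (∑' p : ℕ×ℕ, A p) = doubleZeta 1 (n-1) + zetaVal n := by
    rw [Summable.tsum_prod' hA hpair.1]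
    have hinner : ∀ x : ℕ, (∑' y : ℕ, A (x,y))
        = 1/((x:ℝ)+1)^(n-1) * ∑ i ∈ range (x+1), 1/((i:ℝ)+1) := by
      intro x
      rw [← ((inner_hasSum x).mul_left (1/((x:ℝ)+1)^(n-1))).tsum_eq]
    rw [tsum_congr hinner]
    set T1 : ℕ → ℝ := fun x => ∑ i ∈ range x, 1/(((i:ℝ)+1) * ((x:ℝ)+1)^(n-1)) with hT1def
    set T2 : ℕ → ℝ := fun x => 1/((x:ℝ)+1)^n with hT2def
    have hsplit : ∀ x : ℕ, 1/((x:ℝ)+1)^(n-1) * ∑ i ∈ range (x+1), 1/((i:ℝ)+1)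
        = T1 x + T2 x := by
      intro x
      rw [Finset.sum_range_succ, mul_add, Finset.mul_sum]
      congr 1
      · refine Finset.sum_congr rfl fun i _ => ?_
        rw [div_mul_div_comm, one_mul, mul_comm]
      · rw [div_mul_div_comm, one_mul, ← pow_succ]
        rw [hT2def]
        congr 2
        omega
    rw [tsum_congr hsplit]
    have hT2 : Summable T2 := by
      have h := summable_shift 0 (show 2 ≤ n by omega)
      refine h.congr fun x => ?_
      rw [hT2def]
      norm_num
    have houter : Summable (fun x : ℕ => T1 x + T2 x) := by
      refine hpair.2.congr fun x => ?_
      rw [hinner x, hsplit x]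
    have hT1 : Summable T1 := by
      refine (houter.sub hT2).congr fun x => ?_
      ring
    rw [Summable.tsum_add hT1 hT2]
    have hT2val : (∑' x : ℕ, T2 x) = zetaVal n := rfl
    have hT1val : (∑' x : ℕ, T1 x) = doubleZeta 1 (n-1) := by
      set h' : ℕ×ℕ → ℝ :=
        fun p => if p.2 < p.1 then 1/(((p.2:ℝ)+1) * ((p.1:ℝ)+1)^(n-1)) else 0 with hh
      set e : ℕ×ℕ → ℕ×ℕ := fun q => (q.1+q.2+1, q.1) with he
      have hinj : Function.Injective e := by
        intro a b hab
        simp only [he, Prod.mk.injEq] at hab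
        obtain ⟨h1, h2⟩ := hab
        exact Prod.ext h2 (by omega)
      have hsupp : ∀ p ∉ Set.range e, h' p = 0 := by
        intro p hp
        by_contra hne
        apply hp
        have hlt : p.2 < p.1 := by
          by_contra hcon
          exact hne (by simp only [hh, if_neg hcon])
        exact ⟨(p.2, p.1 - p.2 - 1), by simp only [he]; ext <;> simp <;> omega⟩
      have hcomp : ∀ q : ℕ×ℕ, h' (e q)
          = 1/(((q.1:ℝ)+1)^1 * ((q.1:ℝ)+(q.2:ℝ)+2)^(n-1)) := by
        intro q
        simp only [hh, he]
        rw [if_pos (show q.1 < q.1+q.2+1 by omega)]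
        push_cast
        ring_nf
      have hSh' : Summable h' := by
        rw [← hinj.summable_iff hsupp]
        exact hdz1.congr fun q => (hcomp q).symm
      have hps : ∀ x : ℕ, Summable (fun i : ℕ => h' (x, i)) := by
        intro x
        apply summable_of_ne_finset_zero (s := range x)
        intro i hi
        rw [Finset.mem_range] at hi
        simp only [hh]
        rw [if_neg (by omega)]
      have hT1h' : (∑' x : ℕ, T1 x) = ∑' p : ℕ×ℕ, h' p := by
        rw [Summable.tsum_prod' hSh' hps]
        refine tsum_congr fun x => ?_
        rw [tsum_eq_sum (s := range x)
          (fun i hi => by rw [Finset.mem_range] at hi; simp only [hh]; rw [if_neg (by omega)])]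
        refine Finset.sum_congr rfl fun i hi => ?_
        rw [Finset.mem_range] at hi
        simp only [hh]
        rw [if_pos hi]
      rw [hT1h', ← hinj.tsum_eq (Function.support_subset_iff'.mpr hsupp), doubleZeta]
      exact tsum_congr hcomp
    rw [hT1val, hT2val]
  calc ∑ a ∈ Finset.Icc 1 (n - 2), doubleZeta a (n - a)
      = ∑' p : ℕ×ℕ, ∑ a ∈ Finset.Icc 1 (n-2),
          1 / (((p.1:ℝ)+1)^a * ((p.1:ℝ)+(p.2:ℝ)+2)^(n-a)) := (Summable.tsum_finsetSum hsumm).symm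
    _ = (∑' p : ℕ×ℕ, A p) - ∑' p : ℕ×ℕ, B p := by
        rw [tsum_congr hkey, Summable.tsum_sub hA hB]
    _ = zetaVal n := by rw [hAval, hBval]; ring
end

section
/- For every integer n ≥ 2, ∑_{k=1}^{n-1} ζ(2k, 2n-2k) = (3/4) ζ(2n), where ζ(a,b) = ∑_{0<k₁<k₂} k₁^{-a} k₂^{-b}. -/
open Finset

noncomputable def Hsum (k : ℕ) : ℝ := ∑ i ∈ Finset.range k, 1 / ((i:ℝ)+1)

lemma Hsum_add (m k : ℕ) : Hsum (m + k) = Hsum m + ∑ j ∈ Finset.range k, 1/((m:ℝ)+j+1) := by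
  unfold Hsum
  rw [Finset.sum_range_add]
  congr 1
  refine Finset.sum_congr rfl fun j _ => ?_
  push_cast; ring_nf

lemma tele (K : ℕ) : HasSum (fun j : ℕ => 1/((j:ℝ)+1) - 1/((j:ℝ)+1+K)) (Hsum K) := by
  have hpos : ∀ j : ℕ, 0 ≤ 1/((j:ℝ)+1) - 1/((j:ℝ)+1+K) := by
    intro j
    have h1 : (0:ℝ) < (j:ℝ)+1 := by positivity
    have h2 : ((j:ℝ)+1) ≤ (j:ℝ)+1+K := by
      have : (0:ℝ) ≤ K := by positivity
      linarith
    have := one_div_le_one_div_of_le h1 h2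
    linarith
  rw [hasSum_iff_tendsto_nat_of_nonneg hpos]
  have key : ∀ N : ℕ, ∑ j ∈ Finset.range N, (1/((j:ℝ)+1) - 1/((j:ℝ)+1+K))
      = Hsum K - ∑ j ∈ Finset.range K, 1/((N:ℝ)+j+1) := by
    intro N
    rw [Finset.sum_sub_distrib]
    have e1 : ∑ j ∈ Finset.range N, 1/((j:ℝ)+1+K) = Hsum (K + N) - Hsum K := by
      rw [Hsum_add K N]
      have : ∑ j ∈ Finset.range N, 1/((j:ℝ)+1+K) = ∑ j ∈ Finset.range N, 1/((K:ℝ)+j+1) := by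
        refine Finset.sum_congr rfl fun j _ => ?_; ring_nf
      rw [this]; ring
    have e2 : Hsum (K + N) = Hsum N + ∑ j ∈ Finset.range K, 1/((N:ℝ)+j+1) := by
      rw [Nat.add_comm K N, Hsum_add N K]
    have e3 : ∑ j ∈ Finset.range N, 1/((j:ℝ)+1) = Hsum N := rfl
    rw [e1, e2, e3]; ring
  simp only [key]
  have hE : Filter.Tendsto (fun N : ℕ => ∑ j ∈ Finset.range K, 1/((N:ℝ)+j+1))
      Filter.atTop (nhds 0) := by
    have : Filter.Tendsto (fun N : ℕ => (K:ℝ) * (1/((N:ℝ)+1))) Filter.atTop (nhds 0) := by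
      have := tendsto_one_div_add_atTop_nhds_zero_nat (𝕜 := ℝ)
      simpa using this.const_mul (K:ℝ)
    apply squeeze_zero (fun N => by positivity) _ this
    intro N
    calc ∑ j ∈ Finset.range K, 1/((N:ℝ)+j+1) ≤ ∑ _j ∈ Finset.range K, 1/((N:ℝ)+1) := by
          refine Finset.sum_le_sum fun j _ => ?_
          apply one_div_le_one_div_of_le (by positivity)
          have : (0:ℝ) ≤ j := by positivity
          linarith
      _ = (K:ℝ) * (1/((N:ℝ)+1)) := by rw [Finset.sum_const, Finset.card_range]; ring
  simpa using Filter.Tendsto.sub (tendsto_const_nhds (x := Hsum K)) hE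


noncomputable def Gfun (a b : ℕ) : ℝ :=
  if a = b then 0 else 1 / (((b:ℝ)+1)^2 - ((a:ℝ)+1)^2)

lemma Gfun_tail (a j : ℕ) : Gfun a (j + (a+1))
    = (1/(2*(a:ℝ)+2)) * (1/((j:ℝ)+1) - 1/((j:ℝ)+1+(2*a+2 : ℕ))) := by
  have hne : a ≠ j + (a+1) := by omega
  rw [Gfun, if_neg hne]
  have h1 : ((j + (a+1) : ℕ) : ℝ) = (j:ℝ) + a + 1 := by push_cast; ring
  rw [h1]
  push_cast
  have h2 : ((j:ℝ)+1) ≠ 0 := by positivity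
  have h3 : ((j:ℝ)+1+(2*(a:ℝ)+2)) ≠ 0 := by positivity
  have h4 : (2*(a:ℝ)+2) ≠ 0 := by positivity
  have h5 : ((j:ℝ)+(a:ℝ)+1+1)^2 - ((a:ℝ)+1)^2 = ((j:ℝ)+1)*((j:ℝ)+1+(2*(a:ℝ)+2)) := by ring
  rw [h5]
  field_simp
  ring


lemma summable_Gfun (a : ℕ) : Summable (Gfun a) := by
  rw [← summable_nat_add_iff (a+1)]
  simp only [Gfun_tail]
  exact ((tele (2*a+2)).summable).mul_left _

-- tail sum value
lemma tail_tsum (a : ℕ) : ∑' j : ℕ, Gfun a (j + (a+1))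
    = (1/(2*(a:ℝ)+2)) * Hsum (2*a+2) := by
  simp only [Gfun_tail]
  rw [tsum_mul_left, (tele (2*a+2)).tsum_eq]

-- head harmonic sums
lemma head1 (a : ℕ) : ∑ b ∈ Finset.range a, 1/((a:ℝ)-b) = Hsum a := by
  rw [Hsum, ← Finset.sum_range_reflect (fun b => 1/((b:ℝ)+1)) a]
  refine Finset.sum_congr rfl fun b hb => ?_
  rw [Finset.mem_range] at hb
  congr 1
  have : a - 1 - b = a - (b+1) := by omega
  rw [this, Nat.cast_sub (by omega)]
  push_cast; ring


lemma head2 (a : ℕ) : ∑ b ∈ Finset.range a, 1/((a:ℝ)+b+2) = Hsum (2*a+1) - Hsum (a+1) := by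
  have h : (2*a+1) = (a+1) + a := by omega
  rw [h, Hsum_add (a+1) a]
  push_cast
  have : ∑ b ∈ Finset.range a, 1/((a:ℝ)+b+2) = ∑ j ∈ Finset.range a, 1/((a:ℝ)+1+j+1) := by
    refine Finset.sum_congr rfl fun b _ => ?_; ring_nf
  rw [this]; ring

-- head value
lemma head_tsum (a : ℕ) : ∑ b ∈ Finset.range (a+1), Gfun a b
    = -(1/(2*(a:ℝ)+2)) * (Hsum a + Hsum (2*a+1) - Hsum (a+1)) := by
  rw [Finset.sum_range_succ, Gfun, if_pos rfl, add_zero]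
  have e : ∀ b ∈ Finset.range a, Gfun a b
      = -(1/(2*(a:ℝ)+2)) * (1/((a:ℝ)-b) + 1/((a:ℝ)+b+2)) := by
    intro b hb
    rw [Finset.mem_range] at hb
    rw [Gfun, if_neg (by omega)]
    have h1 : ((a:ℝ)-b) ≠ 0 := by
      have : (b:ℝ) < a := by exact_mod_cast hb
      intro h; nlinarith
    have h2 : ((a:ℝ)+b+2) ≠ 0 := by positivity
    have h4 : (2*(a:ℝ)+2) ≠ 0 := by positivity
    have h5 : ((b:ℝ)+1)^2 - ((a:ℝ)+1)^2 = -(((a:ℝ)-b)*((a:ℝ)+b+2)) := by ring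
    rw [h5]
    field_simp
    ring
  rw [Finset.sum_congr rfl e, ← Finset.mul_sum, Finset.sum_add_distrib, head1, head2]
  ring

lemma Gfun_tsum (a : ℕ) : ∑' b : ℕ, Gfun a b = 3/(4*((a:ℝ)+1)^2) := by
  rw [← Summable.sum_add_tsum_nat_add (a+1) (summable_Gfun a), head_tsum, tail_tsum]
  have h1 : Hsum (2*a+2) = Hsum (2*a+1) + 1/(2*(a:ℝ)+2) := by
    have : 2*a+2 = (2*a+1)+1 := by omega
    rw [this, Hsum, Finset.sum_range_succ, ← Hsum]
    push_cast; ring_nf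
  have h2 : Hsum (a+1) = Hsum a + 1/((a:ℝ)+1) := by
    rw [Hsum, Finset.sum_range_succ, ← Hsum]
  rw [h1, h2]
  have h4 : (2*(a:ℝ)+2) ≠ 0 := by positivity
  have h5 : ((a:ℝ)+1) ≠ 0 := by positivity
  field_simp
  ring


lemma hsq : Summable (fun b : ℕ => 1/((b:ℝ)+1)^2) := by
  have := (Real.summable_one_div_nat_pow (p := 2)).2 (by norm_num)
  have h2 := (summable_nat_add_iff (f := fun n : ℕ => 1/(n:ℝ)^2) 1).2 this
  refine h2.congr fun b => ?_
  push_cast; ring_nf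

noncomputable def z2 : ℝ := ∑' j : ℕ, 1/((j:ℝ)+1)^2

lemma absG_tail_le (a j : ℕ) : |Gfun a (j+(a+1))| ≤ 1/((j:ℝ)+1)^2 := by
  rw [Gfun_tail]
  have hK : (0:ℝ) < 2*(a:ℝ)+2 := by positivity
  have hj : (0:ℝ) < (j:ℝ)+1 := by positivity
  have hjK : (0:ℝ) < (j:ℝ)+1+(2*a+2:ℕ) := by positivity
  have key : (1/(2*(a:ℝ)+2)) * (1/((j:ℝ)+1) - 1/((j:ℝ)+1+(2*a+2 : ℕ)))
      = 1/(((j:ℝ)+1)*((j:ℝ)+1+(2*a+2:ℕ))) := by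
    have : ((2*a+2:ℕ):ℝ) = 2*(a:ℝ)+2 := by push_cast; ring
    rw [this] at *
    field_simp
    ring
  rw [key, abs_of_nonneg (by positivity)]
  apply one_div_le_one_div_of_le (by positivity)
  have : (0:ℝ) ≤ (2*a+2:ℕ) := by positivity
  nlinarith

lemma absG_head_le (a b : ℕ) (hb : b < a) : |Gfun a b| ≤ 1/((a:ℝ)-b)^2 := by
  have hba : (b:ℝ) < a := by exact_mod_cast hb
  rw [Gfun, if_neg (by omega)]
  have h5 : ((b:ℝ)+1)^2 - ((a:ℝ)+1)^2 = -(((a:ℝ)-b)*((a:ℝ)+b+2)) := by ring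
  rw [h5, one_div, abs_inv, ← one_div]
  apply one_div_le_one_div_of_le (by nlinarith)
  rw [abs_neg, abs_of_nonneg (by nlinarith)]
  nlinarith

lemma tsum_absG_le (a : ℕ) : ∑' b : ℕ, |Gfun a b| ≤ 2*z2 := by
  have hs := (summable_Gfun a).abs
  rw [← Summable.sum_add_tsum_nat_add (a+1) hs]
  have htail : ∑' j : ℕ, |Gfun a (j+(a+1))| ≤ z2 :=
    Summable.tsum_le_tsum (fun j => absG_tail_le a j) (by
      apply (hs.comp_injective (add_left_injective (a+1)))) hsq
  have hhead : ∑ b ∈ Finset.range (a+1), |Gfun a b| ≤ z2 := by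
    rw [Finset.sum_range_succ, Gfun, if_pos rfl, abs_zero, add_zero]
    calc ∑ b ∈ Finset.range a, |Gfun a b| ≤ ∑ b ∈ Finset.range a, 1/((a:ℝ)-b)^2 := by
          exact Finset.sum_le_sum fun b hb => absG_head_le a b (Finset.mem_range.1 hb)
      _ = ∑ k ∈ Finset.range a, 1/((k:ℝ)+1)^2 := by
          rw [← Finset.sum_range_reflect (fun b => 1/((b:ℝ)+1)^2) a]
          refine Finset.sum_congr rfl fun b hb => ?_
          rw [Finset.mem_range] at hb
          congr 2
          have h : a - 1 - b = a - (b+1) := by omega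
          rw [h, Nat.cast_sub (by omega)]
          push_cast; ring
      _ ≤ z2 := Summable.sum_le_tsum _ (fun i _ => by positivity) hsq
  linarith

noncomputable def Ffun (n a b : ℕ) : ℝ := (1/((a:ℝ)+1)^(2*n-2)) * Gfun a b

lemma summable_absF {n : ℕ} (hn : 2 ≤ n) :
    Summable (fun p : ℕ × ℕ => |Ffun n p.1 p.2|) := by
  rw [summable_prod_of_nonneg (fun p => abs_nonneg _)]
  constructor
  · intro a
    simp only [Ffun, abs_mul]
    exact ((summable_Gfun a).abs.mul_left _)
  · refine Summable.of_nonneg_of_le (fun a => tsum_nonneg fun b => abs_nonneg _)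
      (fun a => ?_) (hsq.mul_left (2*z2))
    · have h1 : ∑' b : ℕ, |Ffun n a b| = (1/((a:ℝ)+1)^(2*n-2)) * ∑' b : ℕ, |Gfun a b| := by
        simp only [Ffun, abs_mul]
        rw [tsum_mul_left, abs_of_nonneg (by positivity)]
      rw [h1]
      have h2 : (1/((a:ℝ)+1)^(2*n-2)) ≤ 1/((a:ℝ)+1)^2 := by
        apply one_div_le_one_div_of_le (by positivity)
        apply pow_le_pow_right₀ (by linarith [Nat.cast_nonneg (α := ℝ) a]) (by omega)
      have h3 := tsum_absG_le a
      have h4 : (0:ℝ) ≤ ∑' b : ℕ, |Gfun a b| := tsum_nonneg fun b => abs_nonneg _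
      have h5 : (0:ℝ) < ((a:ℝ)+1)^(2*n-2) := by positivity
      calc (1/((a:ℝ)+1)^(2*n-2)) * ∑' b : ℕ, |Gfun a b|
          ≤ (1/((a:ℝ)+1)^2) * (2*z2) := by
            apply mul_le_mul h2 h3 h4 (by positivity)
        _ = (2*z2) * (1/((a:ℝ)+1)^2) := by ring

lemma summable_F {n : ℕ} (hn : 2 ≤ n) :
    Summable (fun p : ℕ × ℕ => Ffun n p.1 p.2) :=
  (summable_absF hn).of_abs




lemma alg1 (N : ℕ) (x y : ℝ) (hxy : x ≠ y) :
    ∑ k ∈ Finset.Icc 1 (N+1), x^k * y^(N+2-k) = x*y*(x^(N+1) - y^(N+1))/(x-y) := by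
  have h0 : Finset.Icc 1 (N+1) = Finset.Ico 1 (N+2) := (Finset.Ico_add_one_right_eq_Icc 1 (N+1)).symm
  rw [h0, Finset.sum_Ico_eq_sum_range]
  have h1 : ∀ i ∈ Finset.range (N+2-1), x^(1+i) * y^(N+2-(1+i)) = x*y*(x^i * y^(N-i)) := by
    intro i hi
    rw [Finset.mem_range] at hi
    have e1 : N+2-(1+i) = (N-i)+1 := by omega
    rw [e1, pow_add, pow_add]
    ring
  rw [Finset.sum_congr rfl h1, ← Finset.mul_sum]
  have h2 : N+2-1 = N+1 := by omega
  rw [h2, eq_div_iff (sub_ne_zero.2 hxy)]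
  have h3 : ∑ i ∈ Finset.range (N+1), x^i * y^(N-i)
      = ∑ i ∈ Finset.range (N+1), x^i * y^(N+1-1-i) := by
    refine Finset.sum_congr rfl fun i hi => by rw [show N+1-1-i = N-i from by omega]
  rw [h3, mul_assoc, geom_sum₂_mul]

lemma pair_sum {n : ℕ} (hn : 2 ≤ n) (a b : ℕ) (hab : a < b) :
    ∑ k ∈ Finset.Icc 1 (n-1), 1/(((a:ℝ)+1)^(2*k) * ((b:ℝ)+1)^(2*n-2*k))
      = Ffun n a b + Ffun n b a := by
  set A : ℝ := (a:ℝ)+1 with hAdef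
  set B : ℝ := (b:ℝ)+1 with hBdef
  have hA : (0:ℝ) < A := by positivity
  have hB : (0:ℝ) < B := by positivity
  have hAB : A < B := by
    have : (a:ℝ) < b := by exact_mod_cast hab
    simp only [hAdef, hBdef]; linarith
  set x : ℝ := 1/A^2 with hxdef
  set y : ℝ := 1/B^2 with hydef
  have hA2B2 : A^2 < B^2 := by nlinarith
  have hxy : x ≠ y := by
    simp only [hxdef, hydef]
    intro h
    rw [div_eq_div_iff (by positivity) (by positivity)] at h
    nlinarith
  have hsub : x - y ≠ 0 := sub_ne_zero.2 hxy
  -- step i : rewrite each term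
  have step1 : ∀ k ∈ Finset.Icc 1 (n-1),
      1/(A^(2*k) * B^(2*n-2*k)) = x^k * y^(n-k) := by
    intro k hk
    rw [Finset.mem_Icc] at hk
    have e1 : x^k = 1/A^(2*k) := by
      rw [hxdef, div_pow, one_pow, ← pow_mul]
    have e2 : y^(n-k) = 1/B^(2*n-2*k) := by
      rw [hydef, div_pow, one_pow, ← pow_mul]
      congr 2
      omega
    rw [e1, e2, div_mul_div_comm, one_mul]
  rw [Finset.sum_congr rfl step1]
  -- step ii : apply alg1 with N = n-2
  have hn2 : n - 1 = (n-2)+1 := by omega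
  have step2 : ∑ k ∈ Finset.Icc 1 (n-1), x^k * y^(n-k)
      = x*y*(x^(n-1) - y^(n-1))/(x-y) := by
    rw [hn2]
    have : ∀ k ∈ Finset.Icc 1 ((n-2)+1), x^k * y^(n-k) = x^k * y^((n-2)+2-k) := by
      intro k hk
      rw [Finset.mem_Icc] at hk
      congr 2
      omega
    rw [Finset.sum_congr rfl this, alg1 (n-2) x y hxy, ← hn2]
  rw [step2]
  -- step iii
  have hx' : x^(n-1) = 1/A^(2*n-2) := by
    rw [hxdef, div_pow, one_pow, ← pow_mul]
    congr 2
    omega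
  have hy' : y^(n-1) = 1/B^(2*n-2) := by
    rw [hydef, div_pow, one_pow, ← pow_mul]
    congr 2
    omega
  have hBA2 : B^2 - A^2 ≠ 0 := by nlinarith
  have hAB2 : A^2 - B^2 ≠ 0 := by intro h; apply hBA2; linarith
  have hkey : x*y/(x-y) = 1/(B^2-A^2) := by
    rw [div_eq_div_iff hsub hBA2, hxdef, hydef]
    field_simp
  have hGab : Gfun a b = x*y/(x-y) := by
    rw [Gfun, if_neg (by omega), ← hBdef, ← hAdef, hkey]
  have hGba : Gfun b a = -(x*y/(x-y)) := by
    rw [Gfun, if_neg (by omega), ← hBdef, ← hAdef, hkey]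
    rw [← one_div_neg_eq_neg_one_div]
    congr 1
    ring
  rw [Ffun, Ffun, hGab, hGba, ← hAdef, ← hBdef, ← hx', ← hy']
  ring



/-- `∑_{k=1}^{n-1} ζ(2k, 2n-2k) = (3/4) ζ(2n)`. -/
theorem double_zeta_even_sum (n : ℕ) (hn : 2 ≤ n) :
    ∑ k ∈ Finset.Icc 1 (n - 1), doubleZeta (2 * k) (2 * n - 2 * k)
      = (3 / 4) * zetaVal (2 * n) := by
  -- the double zeta summands
  set g : ℕ → ℕ × ℕ → ℝ := fun k p =>
    1 / (((p.1 : ℝ) + 1) ^ (2*k) * ((p.1 : ℝ) + (p.2 : ℝ) + 2) ^ (2*n-2*k)) with hg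
  have hg_summable : ∀ k ∈ Finset.Icc 1 (n-1), Summable (g k) := by
    intro k hk
    rw [Finset.mem_Icc] at hk
    have hprod := Summable.mul_of_nonneg hsq hsq
      (fun b => by positivity) (fun b => by positivity)
    refine Summable.of_nonneg_of_le (fun p => by positivity) (fun p => ?_) hprod
    simp only [hg]
    have h1 : (0:ℝ) < ((p.1:ℝ)+1) := by positivity
    have h2 : (0:ℝ) < ((p.1:ℝ)+(p.2:ℝ)+2) := by positivity
    rw [one_div_mul_one_div]
    apply one_div_le_one_div_of_le (by positivity)
    have e1 : ((p.1:ℝ)+1)^2 ≤ ((p.1:ℝ)+1)^(2*k) :=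
      pow_le_pow_right₀ (by linarith [Nat.cast_nonneg (α := ℝ) p.1]) (by omega)
    have e2 : ((p.2:ℝ)+1)^2 ≤ ((p.1:ℝ)+(p.2:ℝ)+2)^(2*n-2*k) := by
      calc ((p.2:ℝ)+1)^2 ≤ ((p.1:ℝ)+(p.2:ℝ)+2)^2 := by
            apply pow_le_pow_left₀ (by positivity) (by linarith [Nat.cast_nonneg (α := ℝ) p.1]) 2
        _ ≤ ((p.1:ℝ)+(p.2:ℝ)+2)^(2*n-2*k) := by
            have c1 := Nat.cast_nonneg (α := ℝ) p.1
            have c2 := Nat.cast_nonneg (α := ℝ) p.2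
            exact pow_le_pow_right₀ (by linarith) (by omega)
    exact mul_le_mul e1 e2 (by positivity) (by positivity)
  -- swap finite sum and tsum
  have hswap : ∑ k ∈ Finset.Icc 1 (n - 1), doubleZeta (2 * k) (2 * n - 2 * k)
      = ∑' p : ℕ × ℕ, ∑ k ∈ Finset.Icc 1 (n-1), g k p := (Summable.tsum_finsetSum hg_summable).symm
  rw [hswap]
  -- pointwise pair identity
  have hpt : ∀ p : ℕ × ℕ, ∑ k ∈ Finset.Icc 1 (n-1), g k p
      = Ffun n p.1 (p.1+p.2+1) + Ffun n (p.1+p.2+1) p.1 := by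
    intro p
    have := pair_sum hn p.1 (p.1+p.2+1) (by omega)
    rw [← this]
    refine Finset.sum_congr rfl fun k _ => ?_
    simp only [hg]
    congr 3
    push_cast
    ring
  rw [tsum_congr hpt]
  -- split into two tsums
  set F1 : ℕ × ℕ → ℝ := fun p => if p.1 < p.2 then Ffun n p.1 p.2 else 0 with hF1
  set F2 : ℕ × ℕ → ℝ := fun p => if p.2 < p.1 then Ffun n p.1 p.2 else 0 with hF2
  have hsF1 : Summable F1 := by
    apply Summable.of_norm_bounded (summable_absF hn)
    intro p
    simp only [hF1]
    split
    · simpa using le_abs_self _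
    · simp [abs_nonneg]
  have hsF2 : Summable F2 := by
    apply Summable.of_norm_bounded (summable_absF hn)
    intro p
    simp only [hF2]
    split
    · simpa using le_abs_self _
    · simp [abs_nonneg]
  set i1 : ℕ × ℕ → ℕ × ℕ := fun p => (p.1, p.1+p.2+1) with hi1
  set i2 : ℕ × ℕ → ℕ × ℕ := fun p => (p.1+p.2+1, p.1) with hi2
  have hinj1 : Function.Injective i1 := by
    intro p q h
    simp only [hi1, Prod.mk.injEq] at h
    obtain ⟨h1, h2⟩ := h
    exact Prod.ext h1 (by omega)
  have hinj2 : Function.Injective i2 := by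
    intro p q h
    simp only [hi2, Prod.mk.injEq] at h
    obtain ⟨h1, h2⟩ := h
    exact Prod.ext h2 (by omega)
  have hcomp1 : ∀ p : ℕ × ℕ, Ffun n p.1 (p.1+p.2+1) = F1 (i1 p) := by
    intro p
    simp only [hF1, hi1]
    rw [if_pos (by omega)]
  have hcomp2 : ∀ p : ℕ × ℕ, Ffun n (p.1+p.2+1) p.1 = F2 (i2 p) := by
    intro p
    simp only [hF2, hi2]
    rw [if_pos (by omega)]
  have hu : Summable (fun p : ℕ × ℕ => Ffun n p.1 (p.1+p.2+1)) := by
    refine ((hsF1.comp_injective hinj1).congr fun p => ?_)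
    exact (hcomp1 p).symm
  have hv : Summable (fun p : ℕ × ℕ => Ffun n (p.1+p.2+1) p.1) := by
    refine ((hsF2.comp_injective hinj2).congr fun p => ?_)
    exact (hcomp2 p).symm
  rw [Summable.tsum_add hu hv]
  -- identify with tsum over distinct pairs
  have hrange1 : ∑' p : ℕ × ℕ, Ffun n p.1 (p.1+p.2+1) = ∑' p : ℕ × ℕ, F1 p := by
    rw [tsum_congr hcomp1]
    apply Function.Injective.tsum_eq hinj1
    intro x hx
    rcases x with ⟨c, d⟩
    simp only [hF1, Function.mem_support] at hx
    have hcd : c < d := by by_contra h; exact hx (if_neg h)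
    exact ⟨(c, d - c - 1), by simp [hi1]; omega⟩
  have hrange2 : ∑' p : ℕ × ℕ, Ffun n (p.1+p.2+1) p.1 = ∑' p : ℕ × ℕ, F2 p := by
    rw [tsum_congr hcomp2]
    apply Function.Injective.tsum_eq hinj2
    intro x hx
    rcases x with ⟨c, d⟩
    simp only [hF2, Function.mem_support] at hx
    have hcd : d < c := by by_contra h; exact hx (if_neg h)
    exact ⟨(d, c - d - 1), by simp [hi2]; omega⟩
  rw [hrange1, hrange2, ← Summable.tsum_add hsF1 hsF2]
  have hmerge : ∀ p : ℕ × ℕ, F1 p + F2 p = Ffun n p.1 p.2 := by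
    intro p
    simp only [hF1, hF2]
    rcases lt_trichotomy p.1 p.2 with h | h | h
    · rw [if_pos h, if_neg (by omega), add_zero]
    · rw [if_neg (by omega), if_neg (by omega), add_zero, Ffun, Gfun, if_pos h, mul_zero]
    · rw [if_neg (by omega), if_pos h, zero_add]
  rw [tsum_congr hmerge]
  -- Fubini and evaluation
  rw [Summable.tsum_prod (summable_F hn)]
  have hinner : ∀ a : ℕ, ∑' b : ℕ, Ffun n a b = (3/4) * (1/((a:ℝ)+1)^(2*n)) := by
    intro a
    simp only [Ffun]
    rw [tsum_mul_left, Gfun_tsum a]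
    have hpow : ((a:ℝ)+1)^(2*n-2) * ((a:ℝ)+1)^2 = ((a:ℝ)+1)^(2*n) := by
      rw [← pow_add]
      congr 1
      omega
    have h1 : ((a:ℝ)+1) ≠ 0 := by positivity
    field_simp
    nlinarith [hpow]
  rw [tsum_congr hinner, tsum_mul_left, zetaVal]
end

section
/- For every integer r ≥ 1, the 2-adic valuation of the rational number 2^{2r+1}/(2r+1) − 4r equals 2 + v₂(r), where v₂ denotes the 2-adic valuation. -/
/-- The 2-adic valuation of `2^{2r+1}/(2r+1) - 4r` equals `2 + v₂(r)`. -/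
theorem val_two_of_coefficient (r : ℕ) (hr : 1 ≤ r) :
    padicValRat 2 ((2 : ℚ) ^ (2 * r + 1) / (2 * r + 1) - 4 * r)
      = 2 + padicValRat 2 (r : ℚ) := by
  haveI : Fact (Nat.Prime 2) := ⟨Nat.prime_two⟩
  set a := padicValNat 2 r with ha
  obtain ⟨m, hm⟩ : 2 ^ a ∣ r := pow_padicValNat_dvd
  have hm0 : m ≠ 0 := by
    rintro rfl; rw [Nat.mul_zero] at hm; omega
  have hmodd : ¬ (2 ∣ m) := by
    rintro ⟨k, rfl⟩
    have hdvd : (2:ℕ) ^ (a + 1) ∣ r := ⟨k, by rw [hm, pow_succ]; ring⟩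
    exact pow_succ_padicValNat_not_dvd (p := 2) (n := r) (by omega) hdvd
  have halt : a < r := lt_of_lt_of_le (Nat.lt_two_pow_self (n := a)) (Nat.le_of_dvd (by omega) ⟨m, hm⟩)
  obtain ⟨e, he⟩ : ∃ e, 2 * r + 1 = e + a + 2 := ⟨2 * r - 1 - a, by omega⟩
  set K : ℤ := 2 ^ e - 2 ^ (a + 1) * (m:ℤ) ^ 2 - m with hK
  have hKodd : ¬ ((2 : ℤ) ∣ K) := by
    have h1 : (2:ℤ) ∣ 2 ^ e := dvd_pow_self 2 (by omega)
    have h2 : (2:ℤ) ∣ 2 ^ (a+1) * (m:ℤ) ^ 2 := dvd_mul_of_dvd_left (dvd_pow_self 2 (by omega)) _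
    have h3 : ¬ ((2:ℤ) ∣ (m:ℤ)) := by exact_mod_cast hmodd
    rw [hK]
    intro h
    exact h3 (by omega)
  have hK0 : K ≠ 0 := by intro h; exact hKodd (by rw [h]; exact dvd_zero 2)
  have hr0 : (r : ℚ) ≠ 0 := by exact_mod_cast (by omega : r ≠ 0)
  have hm0' : (m : ℚ) ≠ 0 := by exact_mod_cast hm0
  have hrQ : (r : ℚ) = 2 ^ a * m := by exact_mod_cast hm
  have key : (2 : ℚ) ^ (2 * r + 1) / (2 * r + 1) - 4 * r
      = (4 * r * (K : ℚ)) / ((m : ℚ) * (2 * r + 1)) := by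
    have hpow : (2 : ℚ) ^ (2 * r + 1) = 2 ^ e * 2 ^ a * 4 := by
      rw [he]; ring
    have hd : (2 * (r:ℚ) + 1) ≠ 0 := by positivity
    rw [hpow, hK, hrQ]
    have hd2 : (2 * ((2:ℚ) ^ a * m) + 1) ≠ 0 := by positivity
    field_simp
    push_cast
    ring
  rw [key]
  have hnum0 : (4 * (r : ℚ) * (K : ℚ)) ≠ 0 := by
    apply mul_ne_zero (mul_ne_zero (by norm_num) hr0)
    exact_mod_cast hK0
  have hden0 : ((m : ℚ) * (2 * (r:ℚ) + 1)) ≠ 0 := by positivity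
  rw [padicValRat.div (p := 2) hnum0 hden0,
      padicValRat.mul (p := 2) (mul_ne_zero (by norm_num) hr0) (by exact_mod_cast hK0),
      padicValRat.mul (p := 2) (by norm_num) hr0,
      padicValRat.mul (p := 2) hm0' (by positivity)]
  have h4 : padicValRat 2 (4 : ℚ) = 2 := by
    rw [show (4:ℚ) = ((4:ℕ):ℚ) by norm_num, ← padicValRat_of_nat,
      show padicValNat 2 4 = 2 by
        rw [show (4:ℕ) = 2 ^ 2 by norm_num]; exact padicValNat.prime_pow 2]
    norm_num
  have hKv : padicValRat 2 ((K : ℚ)) = 0 := by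
    rw [padicValRat.of_int, padicValInt.eq_zero_of_not_dvd (by exact_mod_cast hKodd)]
    simp
  have hmv : padicValRat 2 ((m : ℚ)) = 0 := by
    rw [← padicValRat_of_nat, padicValNat.eq_zero_of_not_dvd hmodd]
    simp
  have hov : padicValRat 2 ((2 * (r:ℚ) + 1)) = 0 := by
    rw [show (2 * (r:ℚ) + 1) = ((2 * r + 1 : ℕ) : ℚ) by push_cast; ring,
      ← padicValRat_of_nat, padicValNat.eq_zero_of_not_dvd (by omega)]
    simp
  rw [h4, hKv, hmv, hov]
  ring
end

section
/- (Sum formula of Granville–Zagier) For all integers n > d ≥ 1, the sum of ζ(k₁,...,k_d) over all tuples (k₁,...,k_d) of positive integers with k₁ + ... + k_d = n and k_d ≥ 2 equals ζ(n). Here ζ(k₁,...,k_d) = ∑_{0<m₁<m₂<...<m_d} m₁^{-k₁} ··· m_d^{-k_d}. -/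
/-- The multiple zeta value `ζ(k₁,…,k_d) = ∑_{0<m₁<⋯<m_d} ∏ m_i^{-k_i}`, where the
strictly increasing tuple is parametrized by gaps: `m_i = (∑_{j ≤ i} a_j) + i + 1`. -/
noncomputable def mzv {d : ℕ} (k : Fin d → ℕ) : ℝ :=
  ∑' a : Fin d → ℕ,
    ∏ i, (1 : ℝ) / ((((∑ j ∈ Finset.Iic i, a j) + (i : ℕ) + 1 : ℕ) : ℝ) ^ (k i))

open Finset Filter ENNReal
open scoped ENNReal

namespace GZ


noncomputable def F (x : ℝ) (m : ℕ) : ℝ := ∏ j ∈ Finset.range m, ((j:ℝ) + 1 - x)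

lemma F_zero (x : ℝ) : F x 0 = 1 := by simp [F]

lemma F_succ (x : ℝ) (m : ℕ) : F x (m+1) = F x m * ((m:ℝ) + 1 - x) := by
  simp [F, Finset.prod_range_succ]

lemma F_pos {x : ℝ} (hx1 : x < 1) (m : ℕ) : 0 < F x m := by
  apply Finset.prod_pos
  intro j _
  have : (0:ℝ) ≤ j := Nat.cast_nonneg j
  linarith

lemma F_add (x : ℝ) (m n : ℕ) :
    F x (m+n) = F x m * ∏ j ∈ Finset.range n, ((m+j:ℝ) + 1 - x) := by
  induction n with
  | zero => simp
  | succ n ih =>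
    rw [show m + (n+1) = (m+n)+1 from rfl, F_succ, ih, Finset.prod_range_succ]
    push_cast
    ring

/-- the connector -/
noncomputable def C (x : ℝ) (m n : ℕ) : ℝ≥0∞ :=
  ENNReal.ofReal (F x m * F x n / F x (m+n))

lemma C_comm (x : ℝ) (m n : ℕ) : C x m n = C x n m := by
  simp [C, mul_comm, Nat.add_comm]

lemma C_zero {x : ℝ} (hx1 : x < 1) (m : ℕ) : C x m 0 = 1 := by
  simp [C, F_zero, div_self (F_pos hx1 m).ne']

lemma hasSum_tel {x : ℝ} (hx0 : 0 ≤ x) (hx1 : x < 1) (v n : ℕ) (hn : 1 ≤ n) :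
    HasSum (fun p : ℕ => (1/((v:ℝ)+1+p - x)) * (F x (v+1+p) * F x n / F x (v+1+p+n)))
      ((1/(n:ℝ)) * (F x v * F x n / F x (v+n))) := by
  set D : ℕ → ℝ := fun p => F x (v+p) * F x n / ((n:ℝ) * F x (v+p+n)) with hD
  have hnR : (0:ℝ) < n := by exact_mod_cast hn
  have hterm : ∀ p : ℕ,
      (1/((v:ℝ)+1+p - x)) * (F x (v+1+p) * F x n / F x (v+1+p+n)) = D p - D (p+1) := by
    intro p
    have e1 : F x (v+1+p) = F x (v+p) * ((v:ℝ)+1+p - x) := by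
      rw [show v+1+p = (v+p)+1 from by omega, F_succ]; push_cast; ring_nf
    have e2 : F x (v+1+p+n) = F x (v+p+n) * ((v:ℝ)+p+n+1 - x) := by
      rw [show v+1+p+n = (v+p+n)+1 from by omega, F_succ]; push_cast; ring_nf
    have e3 : F x (v+(p+1)+n) = F x (v+p+n) * ((v:ℝ)+p+n+1 - x) := by
      rw [show v+(p+1)+n = (v+p+n)+1 from by omega, F_succ]; push_cast; ring_nf
    have e4 : F x (v+(p+1)) = F x (v+p) * ((v:ℝ)+1+p - x) := by
      rw [show v+(p+1) = (v+p)+1 from rfl, F_succ]; push_cast; ring_nf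
    have h1 : ((v:ℝ)+1+p - x) > 0 := by
      have : (0:ℝ) ≤ (v:ℝ)+p := by positivity
      linarith
    have h2 : ((v:ℝ)+p+n+1 - x) > 0 := by
      have : (0:ℝ) ≤ (v:ℝ)+p+n := by positivity
      linarith
    have h3 := F_pos hx1 (v+p+n)
    rw [hD]
    simp only [e1, e2, e3, e4]
    field_simp
    ring
  have hD0 : D 0 = (1/(n:ℝ)) * (F x v * F x n / F x (v+n)) := by
    simp [hD]
    ring
  have htend : Tendsto D atTop (nhds 0) := by
    refine squeeze_zero' (g := fun p : ℕ => (F x n / n) * (1/(p:ℝ))) ?_ ?_ ?_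
    · filter_upwards [eventually_ge_atTop 1] with p _
      have := F_pos hx1 (v+p)
      have := F_pos hx1 n
      have := F_pos hx1 (v+p+n)
      positivity
    · filter_upwards [eventually_ge_atTop 1] with p hp
      have hFn := F_pos hx1 n
      have hFvp := F_pos hx1 (v+p)
      set Q : ℝ := ∏ j ∈ Finset.range n, (((v+p:ℕ):ℝ) + j + 1 - x) with hQ
      have hprod : F x (v+p+n) = F x (v+p) * Q := F_add x (v+p) n
      have hone : ∀ j ∈ Finset.range n, (1:ℝ) ≤ ((v+p:ℕ):ℝ) + j + 1 - x := by
        intro j _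
        have h1 : (1:ℝ) ≤ ((v+p:ℕ):ℝ) := by
          have : 1 ≤ v + p := le_trans hp (Nat.le_add_left p v)
          exact_mod_cast this
        have h2 : (0:ℝ) ≤ (j:ℝ) := Nat.cast_nonneg j
        linarith
      have hge : (p:ℝ) ≤ Q := by
        have h0mem : 0 ∈ Finset.range n := Finset.mem_range.mpr hn
        have hle : ∀ j ∈ Finset.range n, (if j = 0 then (p:ℝ) else 1) ≤ ((v+p:ℕ):ℝ) + j + 1 - x := by
          intro j hj
          by_cases hj0 : j = 0
          · subst hj0; simp only [if_pos rfl]; push_cast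
            linarith [Nat.cast_nonneg (α := ℝ) v]
          · rw [if_neg hj0]; exact hone j hj
        have := Finset.prod_le_prod (s := Finset.range n)
          (f := fun j => if j = 0 then (p:ℝ) else 1)
          (g := fun j : ℕ => ((v+p:ℕ):ℝ) + j + 1 - x)
          (fun j _ => by positivity) hle
        rwa [Finset.prod_ite_eq' (Finset.range n) 0 (fun _ => (p:ℝ)), if_pos h0mem] at this
      have hp0 : (0:ℝ) < p := by exact_mod_cast hp
      have hQpos : (0:ℝ) < Q := lt_of_lt_of_le hp0 hge
      have key : D p = F x n / ((n:ℝ) * Q) := by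
        simp only [hD]
        rw [hprod]
        field_simp
      rw [key, show F x n / (n:ℝ) * (1/(p:ℝ)) = F x n / ((n:ℝ) * p) from by field_simp]
      gcongr
    · have : Tendsto (fun p : ℕ => (1:ℝ)/p) atTop (nhds 0) := tendsto_one_div_atTop_nhds_zero_nat
      simpa using this.const_mul (F x n / n)
  have hnonneg : ∀ p : ℕ, 0 ≤ (1/((v:ℝ)+1+p - x)) * (F x (v+1+p) * F x n / F x (v+1+p+n)) := by
    intro p
    have h1 : (0:ℝ) < (v:ℝ)+1+p - x := by
      have : (0:ℝ) ≤ (v:ℝ)+p := by positivity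
      linarith
    have := F_pos hx1 (v+1+p)
    have := F_pos hx1 n
    have := F_pos hx1 (v+1+p+n)
    positivity
  rw [hasSum_iff_tendsto_nat_of_nonneg hnonneg]
  have : ∀ P : ℕ, ∑ p ∈ Finset.range P, (1/((v:ℝ)+1+p - x)) * (F x (v+1+p) * F x n / F x (v+1+p+n))
      = D 0 - D P := by
    intro P
    rw [← sum_range_sub' D P]
    exact Finset.sum_congr rfl fun p _ => hterm p
  simp only [this, hD0.symm]
  simpa using (tendsto_const_nhds (x := D 0)).sub htend


theorem sum_Iic_eq {n : ℕ} (t : Fin n) (g : Fin n → ℕ) :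
    ∑ i ∈ Iic t, g i = ∑ i, if i ≤ t then g i else 0 := by
  simp_rw [← Finset.mem_Iic, Finset.sum_ite_mem, Finset.univ_inter]

theorem sum_Iic_cons_zero {s : ℕ} (u : ℕ) (b : Fin s → ℕ) :
    ∑ i ∈ Iic (0 : Fin (s+1)), (Fin.cons u b) i = u := by
  rw [show (Iic (0: Fin (s+1))) = {0} from by ext i; simp [Fin.le_zero_iff]]
  simp

theorem sum_Iic_cons_succ {s : ℕ} (u : ℕ) (b : Fin s → ℕ) (j : Fin s) :
    ∑ i ∈ Iic j.succ, (Fin.cons u b) i = u + ∑ i ∈ Iic j, b i := by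
  rw [sum_Iic_eq, Fin.sum_univ_succ, sum_Iic_eq]
  simp [Fin.succ_le_succ_iff, Fin.zero_le]

/-- L1 transport lemma, ENNReal version. -/
lemma L1' {x : ℝ} (hx0 : 0 ≤ x) (hx1 : x < 1) (a n : ℕ) (hn : 1 ≤ n) :
    ∑' p : ℕ, ENNReal.ofReal (1/(((a+1+p:ℕ):ℝ) - x)) * C x (a+1+p) n
      = ENNReal.ofReal (1/(n:ℝ)) * C x a n := by
  have hs := hasSum_tel hx0 hx1 a n hn
  have hnn : ∀ p : ℕ, 0 ≤ (1/((a:ℝ)+1+p - x)) * (F x (a+1+p) * F x n / F x (a+1+p+n)) := by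
    intro p
    have h1 : (0:ℝ) < (a:ℝ)+1+p - x := by
      have : (0:ℝ) ≤ (a:ℝ)+p := by positivity
      linarith
    have := F_pos hx1 (a+1+p)
    have := F_pos hx1 n
    have := F_pos hx1 (a+1+p+n)
    positivity
  calc ∑' p : ℕ, ENNReal.ofReal (1/(((a+1+p:ℕ):ℝ) - x)) * C x (a+1+p) n
      = ∑' p : ℕ, ENNReal.ofReal ((1/((a:ℝ)+1+p - x)) * (F x (a+1+p) * F x n / F x (a+1+p+n))) := by
        apply tsum_congr; intro p
        rw [ENNReal.ofReal_mul]
        · push_cast [C]; ring_nf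
        · have h1 : (0:ℝ) < (a:ℝ)+1+p - x := by
            have : (0:ℝ) ≤ (a:ℝ)+p := by positivity
            linarith
          positivity
    _ = ENNReal.ofReal ((1/(n:ℝ)) * (F x a * F x n / F x (a+n))) := by
        rw [← ENNReal.ofReal_tsum_of_nonneg hnn hs.summable, hs.tsum_eq]
    _ = ENNReal.ofReal (1/(n:ℝ)) * C x a n := by
        rw [ENNReal.ofReal_mul (by positivity), C]

def nseq (v : ℕ) {s : ℕ} (b : Fin s → ℕ) (j : Fin s) : ℕ :=
  v + ((∑ i ∈ Finset.Iic j, b i) + (j:ℕ) + 1)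

lemma nseq_pos (v : ℕ) {s : ℕ} (b : Fin s → ℕ) (j : Fin s) : 1 ≤ nseq v b j := by
  simp [nseq]; omega

lemma nseq_zero (v : ℕ) {s : ℕ} (b : Fin (s+1) → ℕ) : nseq v b 0 = v + b 0 + 1 := by
  rw [nseq, show (Iic (0: Fin (s+1))) = {0} from by ext i; simp [Fin.le_zero_iff]]
  simp
  omega

lemma nseq_cons_zero (v u : ℕ) {s : ℕ} (b : Fin s → ℕ) :
    nseq v (Fin.cons u b) 0 = v + u + 1 := by
  rw [nseq_zero, Fin.cons_zero]

lemma nseq_cons_succ (v u : ℕ) {s : ℕ} (b : Fin s → ℕ) (j : Fin s) :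
    nseq v (Fin.cons u b) j.succ = nseq (v+u+1) b j := by
  rw [nseq, nseq, sum_Iic_cons_succ, Fin.val_succ]
  omega

lemma tsum_cons_split {s : ℕ} (v : ℕ) (g : Fin (s+1) → ℕ → ℝ≥0∞) :
    ∑' b : Fin (s+1) → ℕ, ∏ j, g j (nseq v b j)
      = ∑' u : ℕ, g 0 (v+u+1) * ∑' b : Fin s → ℕ, ∏ j : Fin s, g j.succ (nseq (v+u+1) b j) := by
  rw [← (Fin.consEquiv (fun _ : Fin (s+1) => ℕ)).tsum_eq]
  have hpr := ENNReal.tsum_prod (f := fun (u:ℕ) (b : Fin s → ℕ) =>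
    ∏ j, g j (nseq v (Fin.cons u b) j))
  rw [show (∑' (c : ℕ × (Fin s → ℕ)), ∏ j : Fin (s + 1), g j (nseq v ((Fin.consEquiv fun _ => ℕ) c) j))
      = ∑' (c : ℕ × (Fin s → ℕ)), ∏ j : Fin (s + 1), g j (nseq v (Fin.cons c.1 c.2) j) from rfl, hpr]
  apply tsum_congr; intro u
  rw [← ENNReal.tsum_mul_left]
  apply tsum_congr; intro b
  show ∏ j, g j (nseq v (Fin.cons u b) j) = _
  rw [Fin.prod_univ_succ, nseq_cons_zero]
  congr 1
  exact Finset.prod_congr rfl fun j _ => by rw [nseq_cons_succ]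

noncomputable def wt (x : ℝ) (s : ℕ) (j : Fin (s+1)) (N : ℕ) : ℝ≥0∞ :=
  if j = Fin.last s then ENNReal.ofReal (1/((N:ℝ)*((N:ℝ) - x)))
  else ENNReal.ofReal (1/((N:ℝ) - x))

noncomputable def LL (x : ℝ) (s : ℕ) (v : ℕ) : ℝ≥0∞ :=
  ∑' b : Fin (s+1) → ℕ, ∏ j, wt x s j (nseq v b j)

lemma LL_zero (x : ℝ) (v : ℕ) :
    LL x 0 v = ∑' u : ℕ, ENNReal.ofReal (1/(((v+u+1:ℕ):ℝ)*(((v+u+1:ℕ):ℝ) - x))) := by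
  rw [LL, ← (Equiv.funUnique (Fin 1) ℕ).symm.tsum_eq]
  apply tsum_congr; intro u
  rw [Fin.prod_univ_one]
  have : ((Equiv.funUnique (Fin 1) ℕ).symm u : Fin 1 → ℕ) = fun _ => u := rfl
  rw [this]
  have h0 : nseq v (fun _ : Fin 1 => u) 0 = v + u + 1 := nseq_zero v _
  rw [h0]
  show wt x 0 0 (v+u+1) = _
  simp only [wt]
  rw [if_pos (by decide : (0 : Fin (0+1)) = Fin.last 0)]

lemma LL_succ (x : ℝ) (s v : ℕ) :
    LL x (s+1) v = ∑' u : ℕ, ENNReal.ofReal (1/(((v+u+1:ℕ):ℝ) - x)) * LL x s (v+u+1) := by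
  rw [LL, tsum_cons_split]
  apply tsum_congr; intro u
  rw [LL]
  have h1 : wt x (s+1) 0 (v+u+1) = ENNReal.ofReal (1/(((v+u+1:ℕ):ℝ) - x)) := by
    simp only [wt]
    rw [if_neg]
    intro h
    exact absurd (congrArg Fin.val h) (by simp [Fin.last])
  have h2 : (∑' b : Fin (s+1) → ℕ, ∏ j : Fin (s+1), wt x (s+1) j.succ (nseq (v+u+1) b j))
      = ∑' b : Fin (s+1) → ℕ, ∏ j : Fin (s+1), wt x s j (nseq (v+u+1) b j) := by
    apply tsum_congr; intro b
    apply Finset.prod_congr rfl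
    intro j _
    simp only [wt]
    rcases eq_or_ne j (Fin.last s) with h | h
    · rw [if_pos (by rw [h, Fin.succ_last]), if_pos h]
    · rw [if_neg (fun hc => h (Fin.succ_injective _ (by rwa [← Fin.succ_last] at hc))), if_neg h]
  rw [h1, h2]

lemma swap_helper (A : ℕ → ℝ≥0∞) (T : ℕ → ℕ → ℝ≥0∞) :
    ∑' u, A u * ∑' p, T p u = ∑' p, ∑' u, A u * T p u := by
  rw [← ENNReal.tsum_comm]
  exact tsum_congr fun u => ENNReal.tsum_mul_left.symm

lemma step_lemma {x : ℝ} (hx0 : 0 ≤ x) (hx1 : x < 1) (v : ℕ) (K : ℕ → ℝ≥0∞) :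
    ∑' u:ℕ, ENNReal.ofReal (1/(((v+u+1:ℕ):ℝ) - x)) * ∑' p:ℕ, (K p * C x (p+1) (v+u+1))
      = ∑' p:ℕ, K p * (ENNReal.ofReal (1/((p+1:ℕ):ℝ)) * C x v (p+1)) := by
  rw [swap_helper]
  apply tsum_congr; intro p
  have hc : ∀ u:ℕ, ENNReal.ofReal (1/(((v+u+1:ℕ):ℝ) - x)) * (K p * C x (p+1) (v+u+1))
      = K p * (ENNReal.ofReal (1/(((v+u+1:ℕ):ℝ) - x)) * C x (v+u+1) (p+1)) := by
    intro u; rw [C_comm]; ring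
  simp_rw [hc]
  rw [ENNReal.tsum_mul_left]
  congr 1
  have hidx : ∀ u:ℕ, v+u+1 = v+1+u := by omega
  simp_rw [hidx]
  exact L1' hx0 hx1 v (p+1) (by omega)

lemma LL_eq {x : ℝ} (hx0 : 0 ≤ x) (hx1 : x < 1) :
    ∀ s v : ℕ, LL x s v
      = ∑' p : ℕ, ENNReal.ofReal (1/(((p+1:ℕ):ℝ) - x))
          * (ENNReal.ofReal (1/((p+1:ℕ):ℝ)))^(s+1) * C x v (p+1) := by
  intro s
  induction s with
  | zero =>
    intro v
    rw [LL_zero]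
    have hrw : ∀ u : ℕ, ENNReal.ofReal (1/(((v+u+1:ℕ):ℝ)*(((v+u+1:ℕ):ℝ) - x)))
        = ENNReal.ofReal (1/(((v+u+1:ℕ):ℝ) - x)) * ∑' p : ℕ,
            (ENNReal.ofReal (1/(((p+1:ℕ):ℝ) - x)) * C x (p+1) (v+u+1)) := by
      intro u
      have h1 : ∑' p : ℕ, ENNReal.ofReal (1/(((0+1+p:ℕ):ℝ) - x)) * C x (0+1+p) (v+u+1)
          = ENNReal.ofReal (1/((v+u+1:ℕ):ℝ)) * C x 0 (v+u+1) := L1' hx0 hx1 0 (v+u+1) (by omega)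
      rw [C_comm, C_zero hx1, mul_one] at h1
      have h2 : ∀ p:ℕ, (0+1+p) = p+1 := by omega
      simp_rw [h2] at h1
      rw [h1, ← ENNReal.ofReal_mul (by
        have h3 : (0:ℝ) < ((v+u+1:ℕ):ℝ) - x := by
          push_cast
          have : (0:ℝ) ≤ (v:ℝ)+u := by positivity
          linarith
        positivity)]
      congr 1
      have h4 : ((v+u+1:ℕ):ℝ) ≠ 0 := by positivity
      have h3 : ((v+u+1:ℕ):ℝ) - x ≠ 0 := by
        push_cast
        have h5 : (0:ℝ) ≤ (v:ℝ)+u := by positivity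
        nlinarith [hx1]
      field_simp
    simp_rw [hrw]
    rw [step_lemma hx0 hx1 v]
    apply tsum_congr; intro p
    rw [pow_one]
    ring
  | succ s ih =>
    intro v
    rw [LL_succ]
    simp_rw [fun u => ih (v+u+1)]
    have hcc : ∀ u p : ℕ, C x (v+u+1) (p+1) = C x (p+1) (v+u+1) := fun u p => C_comm x _ _
    simp_rw [hcc]
    rw [step_lemma hx0 hx1 v (K := fun p => ENNReal.ofReal (1/(((p+1:ℕ):ℝ) - x))
      * (ENNReal.ofReal (1/((p+1:ℕ):ℝ)))^(s+1))]
    apply tsum_congr; intro p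
    rw [pow_succ]
    ring


lemma geom_exp {x : ℝ} (hx0 : 0 ≤ x) (hx1 : x < 1) (N : ℕ) (hN : 1 ≤ N) :
    ENNReal.ofReal (1/((N:ℝ) - x))
      = ∑' c : ℕ, (ENNReal.ofReal x)^c * ENNReal.ofReal (1/(N:ℝ)^(c+1)) := by
  have hN1 : (1:ℝ) ≤ (N:ℝ) := by exact_mod_cast hN
  have hNpos : (0:ℝ) < N := by linarith
  have hxN : x / N < 1 := by
    rw [div_lt_one hNpos]; linarith
  have hxN0 : 0 ≤ x / N := by positivity
  have hterm : ∀ c : ℕ, (ENNReal.ofReal x)^c * ENNReal.ofReal (1/(N:ℝ)^(c+1))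
      = ENNReal.ofReal (1/(N:ℝ)) * (ENNReal.ofReal (x/N))^c := by
    intro c
    rw [← ENNReal.ofReal_pow hx0, ← ENNReal.ofReal_mul (by positivity),
      ← ENNReal.ofReal_pow hxN0, ← ENNReal.ofReal_mul (by positivity)]
    congr 1
    rw [div_pow, pow_succ]
    field_simp
  simp_rw [hterm]
  rw [ENNReal.tsum_mul_left, ENNReal.tsum_geometric]
  have h1 : (1:ℝ≥0∞) - ENNReal.ofReal (x/N) = ENNReal.ofReal (1 - x/N) := by
    rw [ENNReal.ofReal_sub _ hxN0, ENNReal.ofReal_one]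
  rw [h1, ← ENNReal.ofReal_inv_of_pos (by linarith), ← ENNReal.ofReal_mul (by positivity)]
  congr 1
  have h2 : (N:ℝ) - x > 0 := by linarith
  field_simp

lemma geom_exp2 {x : ℝ} (hx0 : 0 ≤ x) (hx1 : x < 1) (N : ℕ) (hN : 1 ≤ N) :
    ENNReal.ofReal (1/((N:ℝ)*((N:ℝ) - x)))
      = ∑' c : ℕ, (ENNReal.ofReal x)^c * ENNReal.ofReal (1/(N:ℝ)^(c+2)) := by
  have hN1 : (1:ℝ) ≤ (N:ℝ) := by exact_mod_cast hN
  have hNpos : (0:ℝ) < N := by linarith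
  have hNx : (0:ℝ) < (N:ℝ) - x := by linarith
  have h0 : ENNReal.ofReal (1/((N:ℝ)*((N:ℝ) - x)))
      = ENNReal.ofReal (1/(N:ℝ)) * ENNReal.ofReal (1/((N:ℝ) - x)) := by
    rw [← ENNReal.ofReal_mul (by positivity)]
    congr 1
    field_simp
  rw [h0, geom_exp hx0 hx1 N hN, ← ENNReal.tsum_mul_left]
  apply tsum_congr; intro c
  rw [← mul_assoc, mul_comm (ENNReal.ofReal (1/(N:ℝ))) _, mul_assoc]
  congr 1
  rw [← ENNReal.ofReal_mul (by positivity)]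
  congr 1
  rw [pow_succ]
  field_simp
  ring

lemma prod_tsum : ∀ {k : ℕ} (f : Fin k → ℕ → ℝ≥0∞),
    ∏ j, (∑' c : ℕ, f j c) = ∑' c : Fin k → ℕ, ∏ j, f j (c j) := by
  intro k
  induction k with
  | zero =>
    intro f
    rw [tsum_eq_single (fun i => i.elim0) (fun b hb => absurd (Subsingleton.elim b _) hb)]
    simp
  | succ k ih =>
    intro f
    rw [Fin.prod_univ_succ, ih (fun j c => f j.succ c)]
    rw [← ENNReal.tsum_mul_right]
    have h1 : ∀ c0 : ℕ, f 0 c0 * (∑' c : Fin k → ℕ, ∏ j : Fin k, f j.succ (c j))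
        = ∑' c : Fin k → ℕ, f 0 c0 * ∏ j : Fin k, f j.succ (c j) := fun c0 =>
      ENNReal.tsum_mul_left.symm
    simp_rw [h1]
    have h2 := ENNReal.tsum_prod (f := fun (c0 : ℕ) (c : Fin k → ℕ) =>
      f 0 c0 * ∏ j : Fin k, f j.succ (c j))
    rw [← h2, ← (Fin.consEquiv (fun _ : Fin (k+1) => ℕ)).tsum_eq]
    apply tsum_congr; intro c
    show _ = ∏ j : Fin (k+1), f j ((Fin.cons c.1 c.2 : Fin (k+1) → ℕ) j)
    rw [Fin.prod_univ_succ, Fin.cons_zero]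
    simp [Fin.cons_succ]

lemma tsum_partition {d : ℕ} (G : (Fin d → ℕ) → ℝ≥0∞) :
    ∑' c : Fin d → ℕ, G c
      = ∑' h : ℕ, ∑' c : {c : Fin d → ℕ // ∑ j, c j = h}, G c.val := by
  rw [← (Equiv.sigmaFiberEquiv (fun c : Fin d → ℕ => ∑ j, c j)).tsum_eq]
  exact ENNReal.tsum_sigma (fun h (c : {c : Fin d → ℕ // ∑ j, c j = h}) => G c.val)



noncomputable def zE {d : ℕ} (k : Fin d → ℕ) : ℝ≥0∞ :=
  ∑' b : Fin d → ℕ, ∏ i, ENNReal.ofReal ((1:ℝ) / ((nseq 0 b i : ℕ):ℝ)^(k i))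

def kadd (s : ℕ) (j : Fin (s+1)) : ℕ := if j = Fin.last s then 2 else 1

lemma kadd_le {s : ℕ} (j : Fin (s+1)) : 1 ≤ kadd s j := by
  unfold kadd; split <;> omega

lemma kadd_sum (s : ℕ) : ∑ j, kadd s j = s + 2 := by
  have h : ∀ j : Fin (s+1), kadd s j = (if j = Fin.last s then 1 else 0) + 1 := by
    intro j; unfold kadd; split <;> rfl
  simp_rw [h]
  rw [Finset.sum_add_distrib, Finset.sum_ite_eq' Finset.univ (Fin.last s) (fun _ => 1)]
  simp
  omega

abbrev Adm (s w : ℕ) := {k : Fin (s+1) → ℕ //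
  (∀ i, 1 ≤ k i) ∧ (∑ i, k i) = w ∧ 2 ≤ k (Fin.last s)}

noncomputable def AE (s h : ℕ) : ℝ≥0∞ := ∑' k : Adm s (h+s+2), zE k.val

noncomputable def BE (s h : ℕ) : ℝ≥0∞ :=
  ∑' p : ℕ, ENNReal.ofReal ((1:ℝ)/((p+1:ℕ):ℝ)^(h+s+2))

def fiberEquiv (s h : ℕ) : {c : Fin (s+1) → ℕ // ∑ j, c j = h} ≃ Adm s (h+s+2) where
  toFun c := ⟨fun j => c.val j + kadd s j, by
    refine ⟨fun i => le_add_of_nonneg_of_le (Nat.zero_le _) (kadd_le i), ?_, ?_⟩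
    · rw [Finset.sum_add_distrib, c.prop, kadd_sum]; omega
    · show 2 ≤ c.val (Fin.last s) + kadd s (Fin.last s)
      have : kadd s (Fin.last s) = 2 := by unfold kadd; rw [if_pos rfl]
      omega⟩
  invFun k := ⟨fun j => k.val j - kadd s j, by
    have hle : ∀ j ∈ Finset.univ, kadd s j ≤ k.val j := by
      intro j _
      rcases eq_or_ne j (Fin.last s) with h | h
      · rw [h]; unfold kadd; rw [if_pos rfl]; exact k.prop.2.2
      · unfold kadd; rw [if_neg h]; exact k.prop.1 j
    rw [Finset.sum_tsub_distrib _ hle, k.prop.2.1, kadd_sum]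
    omega⟩
  left_inv c := Subtype.ext (funext fun j => by
    show c.val j + kadd s j - kadd s j = c.val j
    omega)
  right_inv k := Subtype.ext (funext fun j => by
    show k.val j - kadd s j + kadd s j = k.val j
    apply Nat.sub_add_cancel
    rcases eq_or_ne j (Fin.last s) with h | h
    · rw [h]; unfold kadd; rw [if_pos rfl]; exact k.prop.2.2
    · unfold kadd; rw [if_neg h]; exact k.prop.1 j)

lemma AE_eq_fiber (s h : ℕ) :
    AE s h = ∑' c : {c : Fin (s+1) → ℕ // ∑ j, c j = h},
      zE (fun j => c.val j + kadd s j) := by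
  rw [AE, ← (fiberEquiv s h).tsum_eq (fun k => zE k.val)]
  exact tsum_congr fun c => rfl

lemma LL_expand {x : ℝ} (hx0 : 0 ≤ x) (hx1 : x < 1) (s : ℕ) :
    LL x s 0 = ∑' h : ℕ, (ENNReal.ofReal x)^h * AE s h := by
  calc LL x s 0
      = ∑' b : Fin (s+1) → ℕ, ∑' c : Fin (s+1) → ℕ,
          ∏ j, ((ENNReal.ofReal x)^(c j)
            * ENNReal.ofReal ((1:ℝ)/((nseq 0 b j : ℕ):ℝ)^(c j + kadd s j))) := by
        rw [LL]
        apply tsum_congr; intro b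
        rw [← prod_tsum (f := fun j c => (ENNReal.ofReal x)^c
          * ENNReal.ofReal ((1:ℝ)/((nseq 0 b j : ℕ):ℝ)^(c + kadd s j)))]
        apply Finset.prod_congr rfl; intro j _
        rcases eq_or_ne j (Fin.last s) with h | h
        · simp only [wt, kadd, if_pos h]
          exact geom_exp2 hx0 hx1 _ (nseq_pos 0 b j)
        · simp only [wt, kadd, if_neg h]
          exact geom_exp hx0 hx1 _ (nseq_pos 0 b j)
    _ = ∑' b : Fin (s+1) → ℕ, ∑' c : Fin (s+1) → ℕ,
          (ENNReal.ofReal x)^(∑ j, c j)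
            * ∏ j, ENNReal.ofReal ((1:ℝ)/((nseq 0 b j : ℕ):ℝ)^(c j + kadd s j)) := by
        apply tsum_congr; intro b
        apply tsum_congr; intro c
        rw [Finset.prod_mul_distrib, Finset.prod_pow_eq_pow_sum]
    _ = ∑' c : Fin (s+1) → ℕ,
          (ENNReal.ofReal x)^(∑ j, c j) * zE (fun j => c j + kadd s j) := by
        rw [ENNReal.tsum_comm]
        apply tsum_congr; intro c
        rw [zE, ENNReal.tsum_mul_left]
    _ = ∑' h : ℕ, ∑' c : {c : Fin (s+1) → ℕ // ∑ j, c j = h},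
          (ENNReal.ofReal x)^h * zE (fun j => c.val j + kadd s j) := by
        rw [tsum_partition (G := fun c => (ENNReal.ofReal x)^(∑ j, c j)
          * zE (fun j => c j + kadd s j))]
        apply tsum_congr; intro h
        apply tsum_congr; intro c
        rw [c.prop]
    _ = ∑' h : ℕ, (ENNReal.ofReal x)^h * AE s h := by
        apply tsum_congr; intro h
        rw [ENNReal.tsum_mul_left, AE_eq_fiber]

lemma RHS_expand {x : ℝ} (hx0 : 0 ≤ x) (hx1 : x < 1) (s : ℕ) :
    ∑' p : ℕ, ENNReal.ofReal (1/(((p+1:ℕ):ℝ) - x)) * (ENNReal.ofReal (1/((p+1:ℕ):ℝ)))^(s+1)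
      = ∑' h : ℕ, (ENNReal.ofReal x)^h * BE s h := by
  have hterm : ∀ p : ℕ,
      ENNReal.ofReal (1/(((p+1:ℕ):ℝ) - x)) * (ENNReal.ofReal (1/((p+1:ℕ):ℝ)))^(s+1)
        = ∑' c : ℕ, (ENNReal.ofReal x)^c * ENNReal.ofReal ((1:ℝ)/((p+1:ℕ):ℝ)^(c+s+2)) := by
    intro p
    rw [geom_exp hx0 hx1 (p+1) (by omega), ← ENNReal.tsum_mul_right]
    apply tsum_congr; intro c
    rw [mul_assoc]
    congr 1
    rw [← ENNReal.ofReal_pow (by positivity), ← ENNReal.ofReal_mul (by positivity)]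
    congr 1
    rw [div_pow, one_pow, div_mul_div_comm, one_mul, ← pow_add]
    congr 2
    omega
  simp_rw [hterm]
  rw [ENNReal.tsum_comm]
  apply tsum_congr; intro c
  rw [BE, ENNReal.tsum_mul_left]

lemma coeff_identity {x : ℝ} (hx0 : 0 ≤ x) (hx1 : x < 1) (s : ℕ) :
    ∑' h : ℕ, (ENNReal.ofReal x)^h * AE s h = ∑' h : ℕ, (ENNReal.ofReal x)^h * BE s h := by
  rw [← LL_expand hx0 hx1 s, ← RHS_expand hx0 hx1 s, LL_eq hx0 hx1 s 0]
  apply tsum_congr; intro p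
  rw [C_comm, C_zero hx1, mul_one]


lemma hasSum_basel : HasSum (fun p : ℕ => 2*((1:ℝ)/(p+1) - 1/(p+2))) 2 := by
  have hnn : ∀ p : ℕ, 0 ≤ 2*((1:ℝ)/(p+1) - 1/(p+2)) := by
    intro p
    have h1 : (0:ℝ) < (p:ℝ)+1 := by positivity
    have h2 : (0:ℝ) < (p:ℝ)+2 := by positivity
    have : (1:ℝ)/(p+2) ≤ 1/(p+1) := by
      apply one_div_le_one_div_of_le h1; linarith
    linarith
  rw [hasSum_iff_tendsto_nat_of_nonneg hnn]
  have hterm : ∀ p : ℕ, 2*((1:ℝ)/(p+1) - 1/(p+2))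
      = (fun q : ℕ => 2/((q:ℝ)+1)) p - (fun q : ℕ => 2/((q:ℝ)+1)) (p+1) := by
    intro p; push_cast; ring
  simp_rw [hterm, sum_range_sub' (fun q : ℕ => 2/((q:ℝ)+1))]
  have htend : Tendsto (fun q : ℕ => 2/((q:ℝ)+1)) atTop (nhds 0) := by
    have h1 : Tendsto (fun q : ℕ => (1:ℝ)/((q:ℝ)+1)) atTop (nhds 0) :=
      tendsto_one_div_add_atTop_nhds_zero_nat
    simpa [div_eq_mul_inv, mul_comm] using h1.const_mul 2
  simpa using (tendsto_const_nhds (x := (2:ℝ)/((0:ℕ)+1))).sub htend |>.congr (fun n => rfl)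

lemma BE_le (s h : ℕ) : BE s h ≤ 2 := by
  have hnn : ∀ p : ℕ, 0 ≤ 2*((1:ℝ)/(p+1) - 1/(p+2)) := by
    intro p
    have h1 : (0:ℝ) < (p:ℝ)+1 := by positivity
    have : (1:ℝ)/(p+2) ≤ 1/(p+1) := by
      apply one_div_le_one_div_of_le h1; linarith
    linarith
  calc BE s h ≤ ∑' p : ℕ, ENNReal.ofReal (2*((1:ℝ)/(p+1) - 1/(p+2))) := by
        apply ENNReal.tsum_le_tsum
        intro p
        apply ENNReal.ofReal_le_ofReal
        push_cast
        have h1 : (1:ℝ) ≤ (p:ℝ)+1 := by linarith [Nat.cast_nonneg (α := ℝ) p]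
        have h2 : ((p:ℝ)+1)^2 ≤ ((p:ℝ)+1)^(h+s+2) := by
          apply pow_le_pow_right₀ h1; omega
        have h3 : (1:ℝ)/((p:ℝ)+1)^(h+s+2) ≤ 1/((p:ℝ)+1)^2 :=
          one_div_le_one_div_of_le (by positivity) h2
        have h4 : (1:ℝ)/((p:ℝ)+1)^2 ≤ 2*((1:ℝ)/(p+1) - 1/(p+2)) := by
          have e1 : 2*((1:ℝ)/((p:ℝ)+1) - 1/((p:ℝ)+2)) = 2/(((p:ℝ)+1)*((p:ℝ)+2)) := by
            field_simp
            ring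
          rw [e1, div_le_div_iff₀ (by positivity) (by positivity)]
          nlinarith [sq_nonneg ((p:ℝ)+1)]
        linarith
    _ = ENNReal.ofReal 2 := by
        rw [← ENNReal.ofReal_tsum_of_nonneg hnn hasSum_basel.summable, hasSum_basel.tsum_eq]
    _ ≤ 2 := by norm_num

lemma AE_le (s h : ℕ) : AE s h ≤ 2^h * 4 := by
  have hhalf : ENNReal.ofReal ((1:ℝ)/2) = (2:ℝ≥0∞)⁻¹ := by
    rw [one_div, ENNReal.ofReal_inv_of_pos (by norm_num)]
    norm_num
  have hid := coeff_identity (x := (1:ℝ)/2) (by norm_num) (by norm_num) s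
  rw [hhalf] at hid
  have h1 : (2:ℝ≥0∞)⁻¹^h * AE s h ≤ ∑' h' : ℕ, (2:ℝ≥0∞)⁻¹^h' * AE s h' :=
    ENNReal.le_tsum h
  have h2 : ∑' h' : ℕ, (2:ℝ≥0∞)⁻¹^h' * BE s h' ≤ ∑' h' : ℕ, (2:ℝ≥0∞)⁻¹^h' * 2 := by
    apply ENNReal.tsum_le_tsum
    intro h'
    exact mul_le_mul_right (BE_le s h') _
  have h3 : ∑' h' : ℕ, (2:ℝ≥0∞)⁻¹^h' * 2 = 4 := by
    rw [ENNReal.tsum_mul_right, ENNReal.tsum_geometric, ENNReal.one_sub_inv_two]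
    rw [show ((2:ℝ≥0∞)⁻¹)⁻¹ = 2 from by simp]
    norm_num
  have h4 : (2:ℝ≥0∞)⁻¹^h * AE s h ≤ 4 := le_trans h1 (le_trans (le_of_eq hid) (le_trans h2 (le_of_eq h3)))
  calc AE s h = (2:ℝ≥0∞)^h * ((2:ℝ≥0∞)⁻¹^h * AE s h) := by
        rw [← mul_assoc, ← mul_pow, ENNReal.mul_inv_cancel (by norm_num) (by norm_num),
          one_pow, one_mul]
    _ ≤ (2:ℝ≥0∞)^h * 4 := mul_le_mul_right h4 _

lemma AE_ne_top (s h : ℕ) : AE s h ≠ ⊤ :=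
  ne_top_of_le_ne_top (by norm_num [ENNReal.mul_ne_top, ENNReal.pow_ne_top]) (AE_le s h)

lemma BE_ne_top (s h : ℕ) : BE s h ≠ ⊤ :=
  ne_top_of_le_ne_top (by norm_num) (BE_le s h)

lemma summ_aux (c : ℕ → ℝ) (Cb : ℝ) (hb : ∀ g, |c g| ≤ Cb * 2^g)
    {x : ℝ} (hx0 : 0 < x) (hx : x < 1/2) : Summable (fun g => c g * x^g) := by
  apply Summable.of_norm_bounded (g := fun g => Cb * (2*x)^g)
  · exact ((summable_geometric_of_lt_one (by positivity) (by linarith)).mul_left Cb)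
  · intro g
    rw [norm_mul, norm_pow, Real.norm_eq_abs, Real.norm_eq_abs, abs_of_pos hx0, mul_pow]
    calc |c g| * x^g ≤ (Cb * 2^g) * x^g :=
          mul_le_mul_of_nonneg_right (hb g) (by positivity)
      _ = Cb * (2^g * x^g) := by ring

lemma ext0 (c : ℕ → ℝ) (Cb : ℝ) (hb : ∀ g, |c g| ≤ Cb * 2^g)
    (hv : ∀ x : ℝ, 0 < x → x < 1/8 → ∑' g, c g * x^g = 0) : c 0 = 0 := by
  have hCb : 0 ≤ Cb := by nlinarith [hb 0, abs_nonneg (c 0)]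
  by_contra hne
  have hε : 0 < |c 0| := abs_pos.2 hne
  set x : ℝ := min (|c 0|/(8*Cb+1)) (1/16) with hxdef
  have hxpos : 0 < x := lt_min (by positivity) (by norm_num)
  have hx16 : x ≤ 1/16 := min_le_right _ _
  have hx8 : x < 1/8 := by linarith
  have hsum0 : Summable (fun g => c g * x^g) := summ_aux c Cb hb hxpos (by linarith)
  have hb1 : ∀ g, |c (g+1)| ≤ (2*Cb) * 2^g := by
    intro g
    calc |c (g+1)| ≤ Cb * 2^(g+1) := hb _
      _ = (2*Cb) * 2^g := by ring
  have hsum1 : Summable (fun g => c (g+1) * x^g) := summ_aux _ (2*Cb) hb1 hxpos (by linarith)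
  have hzero := hv x hxpos hx8
  rw [Summable.tsum_eq_zero_add hsum0] at hzero
  have hshift : ∑' g : ℕ, c (g+1) * x^(g+1) = x * ∑' g : ℕ, c (g+1) * x^g := by
    rw [← tsum_mul_left]
    apply tsum_congr; intro g
    rw [pow_succ]; ring
  rw [hshift, pow_zero, mul_one] at hzero
  have hsumn : Summable (fun g => ‖c (g+1) * x^g‖) := by
    simpa [abs_mul] using hsum1.abs
  have hT : |∑' g : ℕ, c (g+1) * x^g| ≤ 4*Cb := by
    calc |∑' g : ℕ, c (g+1) * x^g| ≤ ∑' g : ℕ, ‖c (g+1) * x^g‖ :=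
          norm_tsum_le_tsum_norm hsumn
      _ ≤ ∑' g : ℕ, (2*Cb) * (2*x)^g := by
          apply Summable.tsum_le_tsum _ hsumn
            ((summable_geometric_of_lt_one (by positivity) (by linarith)).mul_left (2*Cb))
          intro g
          rw [norm_mul, norm_pow, Real.norm_eq_abs, Real.norm_eq_abs, abs_of_pos hxpos, mul_pow]
          calc |c (g+1)| * x^g ≤ ((2*Cb) * 2^g) * x^g :=
                mul_le_mul_of_nonneg_right (hb1 g) (by positivity)
            _ = (2*Cb) * (2^g * x^g) := by ring
      _ = (2*Cb) * (1 - 2*x)⁻¹ := by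
          rw [tsum_mul_left, tsum_geometric_of_lt_one (by positivity) (by linarith)]
      _ ≤ (2*Cb) * 2 := by
          apply mul_le_mul_of_nonneg_left _ (by positivity)
          rw [inv_le_comm₀ (by linarith) (by norm_num)]
          linarith
      _ = 4*Cb := by ring
  have hc0 : |c 0| ≤ x * (4*Cb) := by
    have : c 0 = -(x * ∑' g : ℕ, c (g+1) * x^g) := by linarith
    rw [this, abs_neg, abs_mul, abs_of_pos hxpos]
    exact mul_le_mul_of_nonneg_left hT (le_of_lt hxpos)
  have hxle : x ≤ |c 0|/(8*Cb+1) := min_le_left _ _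
  have : x * (4*Cb) < |c 0| := by
    calc x * (4*Cb) ≤ (|c 0|/(8*Cb+1)) * (4*Cb) := by
          apply mul_le_mul_of_nonneg_right hxle (by positivity)
      _ < |c 0| := by
          rw [div_mul_eq_mul_div, div_lt_iff₀ (by positivity)]
          nlinarith
  linarith

lemma ext_all (h : ℕ) : ∀ (c : ℕ → ℝ) (Cb : ℝ), (∀ g, |c g| ≤ Cb * 2^g) →
    (∀ x : ℝ, 0 < x → x < 1/8 → ∑' g, c g * x^g = 0) → c h = 0 := by
  induction h with
  | zero => exact fun c Cb hb hv => ext0 c Cb hb hv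
  | succ h ih =>
    intro c Cb hb hv
    have h0 := ext0 c Cb hb hv
    have hb1 : ∀ g, |c (g+1)| ≤ (2*Cb) * 2^g := by
      intro g
      calc |c (g+1)| ≤ Cb * 2^(g+1) := hb _
        _ = (2*Cb) * 2^g := by ring
    apply ih (fun g => c (g+1)) (2*Cb) hb1
    intro x hx1 hx2
    have hsum0 : Summable (fun g => c g * x^g) := summ_aux c Cb hb hx1 (by linarith)
    have hz := hv x hx1 hx2
    rw [Summable.tsum_eq_zero_add hsum0, h0, zero_mul, zero_add] at hz
    have hshift : ∑' g : ℕ, c (g+1) * x^(g+1) = x * ∑' g : ℕ, c (g+1) * x^g := by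
      rw [← tsum_mul_left]
      apply tsum_congr; intro g
      rw [pow_succ]; ring
    rw [hshift] at hz
    rcases mul_eq_zero.1 hz with h | h
    · exact absurd h (ne_of_gt hx1)
    · exact h

lemma AE_eq_BE (s h : ℕ) : AE s h = BE s h := by
  set a : ℕ → ℝ := fun g => (AE s g).toReal with ha
  set b : ℕ → ℝ := fun g => (BE s g).toReal with hbdef
  have hab : ∀ g, a g = b g := by
    intro g
    have hbound : ∀ g, |a g - b g| ≤ 6 * 2^g := by
      intro g
      have ha1 : 0 ≤ a g := ENNReal.toReal_nonneg
      have hb1 : 0 ≤ b g := ENNReal.toReal_nonneg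
      have ha2 : a g ≤ 4 * 2^g := by
        have := ENNReal.toReal_mono (by norm_num [ENNReal.mul_ne_top, ENNReal.pow_ne_top]) (AE_le s g)
        rw [ENNReal.toReal_mul, ENNReal.toReal_pow] at this
        norm_num at this ⊢
        linarith
      have hb2 : b g ≤ 2 := by
        have := ENNReal.toReal_mono (by norm_num) (BE_le s g)
        norm_num at this
        exact this
      have h2g : (1:ℝ) ≤ 2^g := one_le_pow₀ (by norm_num)
      rw [abs_sub_le_iff]
      constructor <;> nlinarith
    have hvan : ∀ x : ℝ, 0 < x → x < 1/8 → ∑' g, (a g - b g) * x^g = 0 := by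
      intro x hx1 hx2
      have hx0 : (0:ℝ) ≤ x := le_of_lt hx1
      have hxlt1 : x < 1 := by linarith
      have hid := coeff_identity hx0 hxlt1 s
      have htR : ∀ (f : ℕ → ℝ≥0∞), (∀ g, f g ≠ ⊤) →
          (∑' g, (ENNReal.ofReal x)^g * f g).toReal = ∑' g, x^g * (f g).toReal := by
        intro f hf
        rw [ENNReal.tsum_toReal_eq (fun g => ENNReal.mul_ne_top
          (ENNReal.pow_ne_top ENNReal.ofReal_ne_top) (hf g))]
        apply tsum_congr; intro g
        rw [ENNReal.toReal_mul, ENNReal.toReal_pow, ENNReal.toReal_ofReal hx0]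
      have hER : ∑' g, x^g * a g = ∑' g, x^g * b g := by
        rw [ha, hbdef, ← htR _ (AE_ne_top s), ← htR _ (BE_ne_top s), hid]
      have hba : ∀ g, |a g| ≤ 4 * 2^g := by
        intro g
        rw [abs_of_nonneg ENNReal.toReal_nonneg]
        have := ENNReal.toReal_mono (by norm_num [ENNReal.mul_ne_top, ENNReal.pow_ne_top]) (AE_le s g)
        rw [ENNReal.toReal_mul, ENNReal.toReal_pow] at this
        norm_num at this ⊢
        linarith
      have hbb : ∀ g, |b g| ≤ 2 * 2^g := by
        intro g
        rw [abs_of_nonneg ENNReal.toReal_nonneg]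
        have h1 : b g ≤ 2 := by
          have := ENNReal.toReal_mono (by norm_num) (BE_le s g)
          norm_num at this
          exact this
        have h2g : (1:ℝ) ≤ 2^g := one_le_pow₀ (by norm_num)
        nlinarith
      have hsa : Summable (fun g => a g * x^g) := summ_aux a 4 hba hx1 (by linarith)
      have hsb : Summable (fun g => b g * x^g) := summ_aux b 2 hbb hx1 (by linarith)
      have : ∑' g, (a g - b g) * x^g = (∑' g, a g * x^g) - (∑' g, b g * x^g) := by
        rw [← Summable.tsum_sub hsa hsb]
        apply tsum_congr; intro g
        ring
      rw [this]
      have e1 : ∑' g, a g * x^g = ∑' g, x^g * a g := tsum_congr fun g => mul_comm _ _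
      have e2 : ∑' g, b g * x^g = ∑' g, x^g * b g := tsum_congr fun g => mul_comm _ _
      rw [e1, e2, hER, sub_self]
    have := ext_all g (fun g => a g - b g) 6 hbound hvan
    change a g - b g = 0 at this
    linarith
  have := hab h
  rwa [ha, hbdef, ENNReal.toReal_eq_toReal_iff' (AE_ne_top s h) (BE_ne_top s h)] at this


lemma nseq_zero_eq {d : ℕ} (b : Fin d → ℕ) (i : Fin d) :
    nseq 0 b i = (∑ j ∈ Finset.Iic i, b j) + (i:ℕ) + 1 := by
  simp [nseq]

lemma mzv_eq {d : ℕ} (k : Fin d → ℕ) : mzv k = (zE k).toReal := by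
  rw [zE, ENNReal.tsum_toReal_eq (fun b => ENNReal.prod_ne_top
    (fun i _ => ENNReal.ofReal_ne_top))]
  rw [mzv]
  apply tsum_congr; intro b
  rw [ENNReal.toReal_prod]
  apply Finset.prod_congr rfl; intro i _
  rw [ENNReal.toReal_ofReal (by positivity), nseq_zero_eq]


end GZ

open GZ in
/-- Sum formula of Granville–Zagier: the sum of all `ζ(k₁,…,k_d)` over admissible
indices of weight `n` and depth `d` equals `ζ(n)`. -/
theorem granville_zagier_sum_formula (n d : ℕ) (hd : 1 ≤ d) (hn : d < n) :
    (∑' k : {k : Fin d → ℕ //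
        (∀ i, 1 ≤ k i) ∧ (∑ i, k i) = n ∧ 2 ≤ k ⟨d - 1, Nat.sub_lt hd Nat.one_pos⟩},
      mzv (k : Fin d → ℕ)) = zetaVal n := by
  obtain ⟨s, rfl⟩ : ∃ s, d = s + 1 := ⟨d - 1, by omega⟩
  set h₀ := n - s - 2 with hh0
  have hn' : n = h₀ + s + 2 := by omega
  have hidx : (⟨s + 1 - 1, Nat.sub_lt hd Nat.one_pos⟩ : Fin (s+1)) = Fin.last s := by
    apply Fin.ext; simp [Fin.last]
  have he : ∀ k : Fin (s+1) → ℕ,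
      ((∀ i, 1 ≤ k i) ∧ (∑ i, k i) = n ∧ 2 ≤ k ⟨s + 1 - 1, Nat.sub_lt hd Nat.one_pos⟩) ↔
      ((∀ i, 1 ≤ k i) ∧ (∑ i, k i) = h₀+s+2 ∧ 2 ≤ k (Fin.last s)) := by
    intro k; rw [hidx, hn']
  have hfin : ∀ k : Adm s (h₀+s+2), zE k.val ≠ ⊤ := by
    intro k
    exact ne_top_of_le_ne_top (AE_ne_top s h₀) (ENNReal.le_tsum k)
  calc (∑' k : {k : Fin (s+1) → ℕ //
        (∀ i, 1 ≤ k i) ∧ (∑ i, k i) = n ∧ 2 ≤ k ⟨s + 1 - 1, Nat.sub_lt hd Nat.one_pos⟩},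
      mzv (k : Fin (s+1) → ℕ))
      = ∑' k : Adm s (h₀+s+2), mzv k.val :=
        Equiv.tsum_eq (Equiv.subtypeEquivRight he) (fun k => mzv k.val)
    _ = ∑' k : Adm s (h₀+s+2), (zE k.val).toReal := tsum_congr (fun k => mzv_eq k.val)
    _ = (AE s h₀).toReal := by
        rw [AE, ENNReal.tsum_toReal_eq hfin]
    _ = (BE s h₀).toReal := by rw [AE_eq_BE]
    _ = zetaVal n := by
        rw [BE, ENNReal.tsum_toReal_eq (fun p => ENNReal.ofReal_ne_top), zetaVal]
        apply tsum_congr; intro p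
        rw [ENNReal.toReal_ofReal (by positivity)]
        rw [← hn']
        push_cast
        ring
end

section
/- For every integer n ≥ 1, the star multiple zeta value ζ*({2}^n) := ∑_{1≤k₁≤k₂≤...≤k_n} 1/(k₁² k₂² ··· k_n²) equals (2 − 2^{2−2n}) ζ(2n). -/
/-- `ζ*({2}^n) = ∑_{1≤k₁≤⋯≤k_n} 1/(k₁²⋯k_n²)`, the weakly increasing tuple being
parametrized by gaps `k_i = (∑_{j ≤ i} a_j) + 1`. -/
noncomputable def zetaStarTwos (n : ℕ) : ℝ :=
  ∑' a : Fin n → ℕ,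
    ∏ i, (1 : ℝ) / ((((∑ j ∈ Finset.Iic i, a j) + 1 : ℕ) : ℝ) ^ 2)

open Finset Filter Topology

noncomputable def zsW (K m : ℕ) : ℝ :=
  ((K.factorial : ℝ))^2 / ((K - m).factorial * (K + m).factorial)

noncomputable def zsF (n : ℕ) (a : Fin n → ℕ) : ℝ :=
  ∏ i, (1 : ℝ) / ((((∑ j ∈ Finset.Iic i, a j) + 1 : ℕ) : ℝ) ^ 2)

noncomputable def zsD (n K : ℕ) : Finset (Fin n → ℕ) :=
  (Fintype.piFinset fun _ => Finset.range K).filter (fun a => ∑ j, a j < K)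

noncomputable def zsT (n K : ℕ) : ℝ := ∑ a ∈ zsD n K, zsF n a

noncomputable def zsR (n K : ℕ) : ℝ :=
  ∑ j ∈ Finset.range K, (-1:ℝ)^j * (2 / ((j+1 : ℕ):ℝ)^(2*n)) * zsW K (j+1)

lemma mem_zsD {n K : ℕ} {a : Fin n → ℕ} : a ∈ zsD n K ↔ ∑ j, a j < K := by
  constructor
  · intro h; exact (Finset.mem_filter.1 h).2
  · intro h
    refine Finset.mem_filter.2 ⟨Fintype.mem_piFinset.2 fun i => ?_, h⟩
    refine Finset.mem_range.2 (lt_of_le_of_lt ?_ h)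
    exact Finset.single_le_sum (f := a) (fun j _ => Nat.zero_le _) (Finset.mem_univ i)

lemma zsW_pos {K m : ℕ} : 0 < zsW K m := by
  unfold zsW
  positivity

lemma zsF_nonneg {n : ℕ} (a : Fin n → ℕ) : 0 ≤ zsF n a := by
  unfold zsF
  positivity

lemma Iic_castSucc_eq {n : ℕ} (i : Fin n) :
    Finset.Iic (Fin.castSucc i) = (Finset.Iic i).map ⟨Fin.castSucc, Fin.castSucc_injective n⟩ := by
  ext j
  simp only [Finset.mem_Iic, Finset.mem_map, Function.Embedding.coeFn_mk]
  constructor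
  · intro hj
    have hj' : (j : ℕ) ≤ (i : ℕ) := by simpa [Fin.le_def] using hj
    exact ⟨⟨(j : ℕ), lt_of_le_of_lt hj' i.isLt⟩, by simpa [Fin.le_def] using hj',
      by simp [Fin.ext_iff]⟩
  · rintro ⟨t, ht, rfl⟩
    rw [Fin.le_def] at ht ⊢
    simpa using ht

lemma sum_Iic_castSucc {n : ℕ} (b : Fin (n+1) → ℕ) (i : Fin n) :
    ∑ j ∈ Finset.Iic (Fin.castSucc i), b j = ∑ j ∈ Finset.Iic i, b (Fin.castSucc j) := by
  rw [Iic_castSucc_eq, Finset.sum_map]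
  rfl

lemma zsF_snoc {n : ℕ} (a : Fin n → ℕ) (m : ℕ) :
    zsF (n+1) (Fin.snoc a m) = zsF n a * (1 / (((∑ j, a j) + m + 1 : ℕ) : ℝ)^2) := by
  unfold zsF
  rw [Fin.prod_univ_castSucc]
  congr 1
  · refine Finset.prod_congr rfl fun i _ => ?_
    rw [sum_Iic_castSucc]
    simp [Fin.snoc_castSucc]
  · have h1 : Finset.Iic (Fin.last n) = (Finset.univ : Finset (Fin (n+1))) := by
      ext j; simp [Fin.le_last]
    rw [h1, Fin.sum_univ_castSucc]
    simp [Fin.snoc_castSucc, Fin.snoc_last]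

lemma zsT_succ (n K : ℕ) :
    zsT (n+1) K = ∑ k ∈ Finset.range K, (1 / ((k+1 : ℕ):ℝ)^2) * zsT n (k+1) := by
  unfold zsT
  have : ∀ k ∈ Finset.range K, (1 / ((k+1 : ℕ):ℝ)^2) * ∑ a ∈ zsD n (k+1), zsF n a
      = ∑ a ∈ zsD n (k+1), zsF n a * (1 / ((k+1 : ℕ):ℝ)^2) := by
    intro k _
    rw [Finset.mul_sum]
    exact Finset.sum_congr rfl fun a _ => mul_comm _ _
  rw [Finset.sum_congr rfl this, Finset.sum_sigma']
  refine (Finset.sum_nbij' (i := fun p => Fin.snoc p.2 (p.1 - ∑ j, p.2 j))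
    (j := fun a => ⟨∑ j, a j, Fin.init a⟩) ?_ ?_ ?_ ?_ ?_).symm
  · rintro ⟨k, a⟩ hp
    simp only [Finset.mem_sigma, Finset.mem_range, mem_zsD] at hp
    obtain ⟨hk, ha⟩ := hp
    have hle : ∑ j, a j ≤ k := Nat.lt_succ_iff.1 ha
    have : ∑ j, (Fin.snoc a (k - ∑ j, a j) : Fin (n+1) → ℕ) j = k := by
      rw [Fin.sum_univ_castSucc]
      simp only [Fin.snoc_castSucc, Fin.snoc_last]
      omega
    show Fin.snoc a (k - ∑ j, a j) ∈ zsD (n+1) K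
    rw [mem_zsD, this]
    exact hk
  · intro a ha
    rw [mem_zsD] at ha
    have hsum : ∑ j, a j = (∑ j, Fin.init a j) + a (Fin.last n) := by
      rw [Fin.sum_univ_castSucc]; rfl
    simp only [Finset.mem_sigma, Finset.mem_range, mem_zsD]
    exact ⟨ha, by omega⟩
  · rintro ⟨k, a⟩ hp
    simp only [Finset.mem_sigma, Finset.mem_range, mem_zsD] at hp
    obtain ⟨hk, ha⟩ := hp
    have hle : ∑ j, a j ≤ k := Nat.lt_succ_iff.1 ha
    have hsum : ∑ j, (Fin.snoc a (k - ∑ j, a j) : Fin (n+1) → ℕ) j = k := by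
      rw [Fin.sum_univ_castSucc]
      simp only [Fin.snoc_castSucc, Fin.snoc_last]
      omega
    refine Sigma.ext (by simpa using hsum) ?_
    simp only [hsum]
    simp [Fin.init_snoc]
  · intro a ha
    have hsum : ∑ j, a j = (∑ j, Fin.init a j) + a (Fin.last n) := by
      rw [Fin.sum_univ_castSucc]; rfl
    have h2 : (∑ j, a j) - ∑ j, Fin.init a j = a (Fin.last n) := by omega
    show Fin.snoc (Fin.init a) ((∑ j, a j) - ∑ j, Fin.init a j) = a
    rw [h2]
    exact Fin.snoc_init_self a
  · rintro ⟨k, a⟩ hp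
    simp only [Finset.mem_sigma, Finset.mem_range, mem_zsD] at hp
    obtain ⟨hk, ha⟩ := hp
    have hle : ∑ j, a j ≤ k := Nat.lt_succ_iff.1 ha
    have hk2 : (∑ j, a j) + (k - ∑ j, a j) + 1 = k + 1 := by omega
    show zsF n a * (1 / ((k+1 : ℕ):ℝ)^2) = zsF (n+1) (Fin.snoc a (k - ∑ j, a j))
    rw [zsF_snoc, hk2]

lemma alt_choose' (N' : ℕ) : ∀ r : ℕ, r < N' + 1 →
    ∑ m ∈ Finset.range (r+1), (-1:ℤ)^m * ((N'+1).choose m) = (-1)^r * (N'.choose r) := by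
  intro r
  induction r with
  | zero => simp
  | succ r ih =>
    intro h
    rw [Finset.sum_range_succ, ih (by omega), Nat.choose_succ_succ']
    push_cast
    ring

lemma zsW_eq_choose (K m : ℕ) (h : m ≤ K) :
    zsW K m = (((2*K).choose (K-m) : ℝ)) * ((K.factorial : ℝ))^2 / ((2*K).factorial : ℝ) := by
  have key : (2*K).choose (K-m) * (K-m).factorial * (K+m).factorial = (2*K).factorial := by
    have h2 : 2*K - (K-m) = K + m := by omega
    have := Nat.choose_mul_factorial_mul_factorial (show K - m ≤ 2*K by omega)
    rw [h2] at this
    exact this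
  have h1 : (((K-m).factorial : ℝ) * ((K+m).factorial : ℝ)) ≠ 0 := by positivity
  have h2 : ((2*K).factorial : ℝ) ≠ 0 := by positivity
  unfold zsW
  rw [div_eq_div_iff h1 h2, ← key]
  push_cast
  ring

lemma two_choose (K' : ℕ) : 2 * (2*K'+1).choose K' = (2*(K'+1)).choose (K'+1) := by
  have e2 : 2*(K'+1) = (2*K'+1)+1 := by omega
  have h3 : (2*K'+1).choose (K'+1) = (2*K'+1).choose K' := by
    rw [← Nat.choose_symm (show K'+1 ≤ 2*K'+1 by omega)]
    congr 1
    omega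
  rw [e2, Nat.choose_succ_succ, h3]
  omega

lemma base_int (K' : ℕ) :
    ∑ j ∈ Finset.range (K'+1), (-1:ℤ)^j * ((2*(K'+1)).choose (K'-j)) = ((2*K'+1).choose K') := by
  have hrefl := Finset.sum_range_reflect (fun j => (-1:ℤ)^j * ((2*(K'+1)).choose (K'-j))) (K'+1)
  rw [← hrefl]
  have : ∀ j ∈ Finset.range (K'+1), (-1:ℤ)^(K'+1-1-j) * ((2*(K'+1)).choose (K'-(K'+1-1-j)))
      = (-1:ℤ)^K' * ((-1:ℤ)^j * ((2*(K'+1)).choose j)) := by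
    intro j hj
    rw [Finset.mem_range] at hj
    have h1 : K'-(K'+1-1-j) = j := by omega
    have h1' : K'+1-1-j = K'-j := by omega
    rw [h1, h1']
    have h2 : (-1:ℤ)^(K'-j) = (-1:ℤ)^K' * (-1:ℤ)^j := by
      conv_rhs => rw [show K' = (K'-j)+j from by omega]
      rw [pow_add, mul_assoc, ← pow_add, ← two_mul, pow_mul]
      simp
    rw [h2]
    ring
  rw [Finset.sum_congr rfl this, ← Finset.mul_sum]
  have e1 : (2*(K'+1)) = (2*K'+1)+1 := by omega
  rw [e1, alt_choose' (2*K'+1) K' (by omega)]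
  rw [← mul_assoc, ← pow_add, ← two_mul, pow_mul]
  simp

lemma zsW_step (m K : ℕ) (h1 : 1 ≤ m) (h2 : m ≤ K) :
    zsW K m / (m:ℝ)^2 + zsW (K+1) m / ((K+1:ℕ):ℝ)^2 = zsW (K+1) m / (m:ℝ)^2 := by
  unfold zsW
  have e1 : K + 1 - m = (K - m) + 1 := by omega
  have e2 : K + 1 + m = (K + m) + 1 := by omega
  rw [e1, e2, Nat.factorial_succ, Nat.factorial_succ, Nat.factorial_succ]
  have c1 : ((K-m).factorial : ℝ) ≠ 0 := by positivity
  have c2 : ((K+m).factorial : ℝ) ≠ 0 := by positivity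
  have c3 : (m:ℝ) ≠ 0 := by positivity
  have c4 : ((K:ℝ)+1) ≠ 0 := by positivity
  have c5 : ((K-m:ℕ):ℝ) + 1 ≠ 0 := by positivity
  have c6 : ((K+m:ℕ):ℝ) + 1 ≠ 0 := by positivity
  have hsub : ((K-m:ℕ):ℝ) = (K:ℝ) - (m:ℝ) := by
    push_cast [Nat.cast_sub h2]
    ring
  have hm : (m:ℝ) ≤ (K:ℝ) := by exact_mod_cast h2
  have c5' : (K:ℝ) - (m:ℝ) + 1 ≠ 0 := by
    have : (0:ℝ) < (K:ℝ) - (m:ℝ) + 1 := by linarith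
    exact ne_of_gt this
  push_cast
  rw [hsub]
  field_simp
  ring

lemma tele_s18 (j : ℕ) : ∀ K, j < K →
    ∑ k ∈ Finset.Ico j K, zsW (k+1) (j+1) / ((k+1:ℕ):ℝ)^2 = zsW K (j+1) / ((j+1:ℕ):ℝ)^2 := by
  intro K
  induction K with
  | zero => omega
  | succ K ih =>
    intro h
    rw [Finset.sum_Ico_succ_top (by omega)]
    rcases Nat.lt_or_ge j K with hK | hK
    · rw [ih hK]
      exact zsW_step (j+1) K (by omega) (by omega)
    · have hjK : j = K := by omega
      subst hjK
      rw [Finset.Ico_self, Finset.sum_empty, zero_add]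

lemma zsR_zero (K : ℕ) (h : 1 ≤ K) : zsR 0 K = 1 := by
  obtain ⟨K', rfl⟩ : ∃ K', K = K'+1 := ⟨K-1, by omega⟩
  unfold zsR
  have hterm : ∀ j ∈ Finset.range (K'+1), (-1:ℝ)^j * (2/((j+1:ℕ):ℝ)^(2*0)) * zsW (K'+1) (j+1)
       = (((-1:ℤ)^j * ((2*(K'+1)).choose (K'-j)) : ℤ) : ℝ) * (2 * (((K'+1).factorial:ℝ))^2 / (((2*(K'+1)).factorial : ℝ))) := by
    intro j hj
    rw [Finset.mem_range] at hj
    rw [zsW_eq_choose (K'+1) (j+1) (by omega)]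
    have e : K'+1-(j+1) = K'-j := by omega
    rw [e]
    push_cast
    ring
  rw [Finset.sum_congr rfl hterm, ← Finset.sum_mul]
  have hsum : ∑ j ∈ Finset.range (K'+1), (((-1:ℤ)^j * ((2*(K'+1)).choose (K'-j)) : ℤ) : ℝ)
      = (((2*K'+1).choose K' : ℤ) : ℝ) := by
    exact_mod_cast congrArg (Int.cast : ℤ → ℝ) (base_int K')
  rw [hsum]
  have key : ((2*(K'+1)).choose (K'+1)) * (K'+1).factorial * (K'+1).factorial
      = (2*(K'+1)).factorial := by
    have h1 := Nat.choose_mul_factorial_mul_factorial (show K'+1 ≤ 2*(K'+1) by omega)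
    have e : 2*(K'+1) - (K'+1) = K'+1 := by omega
    rw [e] at h1
    exact h1
  have h2 : (((2*(K'+1)).factorial : ℕ) : ℝ) ≠ 0 := by positivity
  calc (((2*K'+1).choose K' : ℤ) : ℝ) * (2 * (((K'+1).factorial:ℝ))^2 / (((2*(K'+1)).factorial : ℝ)))
      = ((2 * (2*K'+1).choose K' : ℕ) : ℝ) * (((K'+1).factorial:ℝ))^2 / (((2*(K'+1)).factorial : ℝ)) := by
        push_cast; ring
    _ = 1 := by
        rw [two_choose K', div_eq_one_iff_eq h2, ← key]
        push_cast
        ring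

lemma tri (K : ℕ) (F : ℕ → ℕ → ℝ) :
    ∑ k ∈ Finset.range K, ∑ j ∈ Finset.range (k+1), F k j
      = ∑ j ∈ Finset.range K, ∑ k ∈ Finset.Ico j K, F k j := by
  simp only [Finset.range_eq_Ico]
  exact (Finset.sum_Ico_Ico_comm 0 K (fun j k => F k j)).symm

lemma zsT_eq_zsR : ∀ n K, 1 ≤ K → zsT n K = zsR n K := by
  intro n
  induction n with
  | zero =>
    intro K hK
    have hD : zsD 0 K = (Finset.univ : Finset (Fin 0 → ℕ)) := by
      ext a
      simp only [Finset.mem_univ, iff_true, mem_zsD]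
      simpa using (show 0 < K by omega)
    rw [zsT, hD, zsR_zero K hK]
    simp [zsF]
  | succ n ih =>
    intro K hK
    rw [zsT_succ]
    have h1 : ∀ k ∈ Finset.range K, (1 / ((k+1 : ℕ):ℝ)^2) * zsT n (k+1)
        = ∑ j ∈ Finset.range (k+1), ((-1:ℝ)^j * (2 / ((j+1 : ℕ):ℝ)^(2*n)))
            * (zsW (k+1) (j+1) / ((k+1 : ℕ):ℝ)^2) := by
      intro k _
      rw [ih (k+1) (by omega), zsR, Finset.mul_sum]
      refine Finset.sum_congr rfl fun j _ => ?_
      ring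
    rw [Finset.sum_congr rfl h1, tri]
    refine Finset.sum_congr rfl fun j hj => ?_
    rw [Finset.mem_range] at hj
    have h2 : ∀ k ∈ Finset.Ico j K, ((-1:ℝ)^j * (2 / ((j+1 : ℕ):ℝ)^(2*n)))
            * (zsW (k+1) (j+1) / ((k+1 : ℕ):ℝ)^2)
        = ((-1:ℝ)^j * (2 / ((j+1 : ℕ):ℝ)^(2*n))) * (zsW (k+1) (j+1) / ((k+1:ℕ):ℝ)^2) := fun _ _ => rfl
    rw [← Finset.mul_sum, tele_s18 j K hj]
    have e0 : 2*(n+1) = 2*n + 2 := by ring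
    have e : ((j+1:ℕ):ℝ)^(2*(n+1)) = ((j+1:ℕ):ℝ)^(2*n) * ((j+1:ℕ):ℝ)^2 := by
      rw [e0, pow_add]
    rw [e]
    have hj1 : ((j+1:ℕ):ℝ) ≠ 0 := by positivity
    field_simp

lemma fact_ineq (K : ℕ) : ∀ m, m ≤ K →
    K.factorial * K.factorial ≤ (K-m).factorial * (K+m).factorial := by
  intro m
  induction m with
  | zero => simp
  | succ m ih =>
    intro h
    refine le_trans (ih (by omega)) ?_
    have e1 : K - m = (K - (m+1)) + 1 := by omega
    have e2 : K + (m+1) = (K + m) + 1 := by omega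
    rw [e1, e2, Nat.factorial_succ, Nat.factorial_succ]
    have hle : K - (m+1) + 1 ≤ K + m + 1 := by omega
    calc (K-(m+1)+1) * (K-(m+1)).factorial * (K+m).factorial
        ≤ (K+m+1) * ((K-(m+1)).factorial * (K+m).factorial) := by
          rw [mul_assoc]
          exact Nat.mul_le_mul_right _ hle
      _ = (K-(m+1)).factorial * ((K+m+1) * (K+m).factorial) := by ring

lemma zsW_le_one (K m : ℕ) (h : m ≤ K) : zsW K m ≤ 1 := by
  rw [zsW, div_le_one (by positivity), pow_two]
  exact_mod_cast fact_ineq K m h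

lemma zsW_nonneg (K m : ℕ) : 0 ≤ zsW K m := by
  rw [zsW]; positivity

lemma zsW_prod (m : ℕ) : ∀ K, m ≤ K →
    zsW K m = ∏ i ∈ Finset.range m, (((K:ℝ) - i) / ((K:ℝ) + i + 1)) := by
  induction m with
  | zero =>
    intro K _
    rw [zsW]
    simp only [Nat.sub_zero, Nat.add_zero, Finset.range_zero, Finset.prod_empty, pow_two]
    rw [div_self (by positivity)]
  | succ m ih =>
    intro K h
    rw [Finset.prod_range_succ, ← ih K (by omega)]
    have e1 : K - m = (K - (m+1)) + 1 := by omega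
    have e2 : K + (m+1) = (K + m) + 1 := by omega
    have hA : (((K-m).factorial : ℕ) : ℝ) = ((K:ℝ) - (m:ℝ)) * (((K - (m+1)).factorial : ℕ) : ℝ) := by
      rw [e1, Nat.factorial_succ]
      push_cast [Nat.cast_sub (show m+1 ≤ K from h)]
      ring
    have hB : (((K+(m+1)).factorial : ℕ) : ℝ) = ((K:ℝ) + (m:ℝ) + 1) * (((K + m).factorial : ℕ) : ℝ) := by
      rw [e2, Nat.factorial_succ]
      push_cast
      ring
    rw [zsW, zsW, hA, hB]
    have hX : (((K - (m+1)).factorial : ℕ) : ℝ) ≠ 0 := by positivity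
    have hY : (((K + m).factorial : ℕ) : ℝ) ≠ 0 := by positivity
    have hu : ((K:ℝ) - (m:ℝ)) ≠ 0 := by
      have : (m:ℝ) < (K:ℝ) := by exact_mod_cast (show m < K by omega)
      intro hc
      linarith
    have hv : ((K:ℝ) + (m:ℝ) + 1) ≠ 0 := by positivity
    field_simp

lemma zsW_tendsto (m : ℕ) : Tendsto (fun K => zsW K m) atTop (𝓝 1) := by
  have hfac : ∀ i : ℕ, Tendsto (fun K : ℕ => ((K:ℝ) - i) / ((K:ℝ) + i + 1)) atTop (𝓝 1) := by
    intro i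
    have hevent : (fun K : ℕ => 1 - (2*(i:ℝ)+1) / ((K:ℝ) + i + 1))
        =ᶠ[atTop] (fun K : ℕ => ((K:ℝ) - i) / ((K:ℝ) + i + 1)) := by
      filter_upwards [eventually_ge_atTop 1] with K _
      have : ((K:ℝ) + i + 1) ≠ 0 := by positivity
      field_simp
      ring
    have hzero : Tendsto (fun K : ℕ => (2*(i:ℝ)+1) / ((K:ℝ) + i + 1)) atTop (𝓝 0) := by
      apply Tendsto.div_atTop tendsto_const_nhds
      have h1 : Tendsto (fun K : ℕ => (K:ℝ)) atTop atTop := tendsto_natCast_atTop_atTop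
      have h2 := tendsto_atTop_add_const_right atTop ((i:ℝ) + 1) h1
      refine h2.congr fun K => by ring
    have hlim := Tendsto.sub (tendsto_const_nhds (x := (1:ℝ)) (f := atTop (α := ℕ))) hzero
    simpa using Tendsto.congr' hevent hlim
  have hprod : Tendsto (fun K : ℕ => ∏ i ∈ Finset.range m, (((K:ℝ) - i) / ((K:ℝ) + i + 1)))
      atTop (𝓝 (∏ i ∈ Finset.range m, (1:ℝ))) := by
    exact tendsto_finset_prod _ (fun i _ => hfac i)
  rw [Finset.prod_const_one] at hprod
  refine Tendsto.congr' ?_ hprod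
  filter_upwards [eventually_ge_atTop m] with K hK
  exact (zsW_prod m K hK).symm

lemma summable_base : Summable (fun j : ℕ => 1 / ((j:ℝ)+1)^2) := by
  have h := Real.summable_one_div_nat_pow (p := 2) |>.mpr one_lt_two
  have h2 := (summable_nat_add_iff (f := fun n : ℕ => 1 / (n:ℝ)^2) 1).2 h
  refine h2.congr fun j => ?_
  push_cast
  ring_nf

lemma term_bound (n j K : ℕ) (hn : 1 ≤ n) (hjK : j < K) :
    |(-1:ℝ)^j * (2 / ((j+1 : ℕ):ℝ)^(2*n)) * zsW K (j+1)| ≤ 2 / (((j:ℝ)+1))^2 := by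
  have hb : (1:ℝ) ≤ ((j+1:ℕ):ℝ) := by exact_mod_cast Nat.one_le_iff_ne_zero.2 (Nat.succ_ne_zero j)
  have hpow : ((j+1:ℕ):ℝ)^2 ≤ ((j+1:ℕ):ℝ)^(2*n) := pow_le_pow_right₀ hb (by omega)
  have h2 : (0:ℝ) < ((j+1:ℕ):ℝ)^2 := by positivity
  have hw0 := zsW_nonneg K (j+1)
  have hw1 := zsW_le_one K (j+1) (by omega)
  rw [abs_mul, abs_mul]
  have e1 : |(-1:ℝ)^j| = 1 := by
    rw [abs_pow, abs_neg, abs_one, one_pow]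
  have e2 : |2 / ((j+1 : ℕ):ℝ)^(2*n)| = 2 / ((j+1 : ℕ):ℝ)^(2*n) := abs_of_nonneg (by positivity)
  have e3 : |zsW K (j+1)| = zsW K (j+1) := abs_of_nonneg hw0
  rw [e1, e2, e3, one_mul]
  calc (2 / ((j+1 : ℕ):ℝ)^(2*n)) * zsW K (j+1)
      ≤ (2 / ((j+1 : ℕ):ℝ)^(2*n)) * 1 := by
        apply mul_le_mul_of_nonneg_left hw1 (by positivity)
    _ = 2 / ((j+1 : ℕ):ℝ)^(2*n) := mul_one _
    _ ≤ 2 / ((j+1 : ℕ):ℝ)^2 := div_le_div_of_nonneg_left (by norm_num) h2 hpow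
    _ = 2 / (((j:ℝ)+1))^2 := by push_cast; ring_nf

lemma zsR_le (n K : ℕ) (hn : 1 ≤ n) : zsR n K ≤ ∑' j : ℕ, 2 / (((j:ℝ)+1))^2 := by
  have hsum : Summable (fun j : ℕ => 2 / (((j:ℝ)+1))^2) := by
    have := summable_base.mul_left 2
    refine this.congr fun j => ?_
    rw [mul_one_div]
  calc zsR n K ≤ ∑ j ∈ Finset.range K, 2 / (((j:ℝ)+1))^2 := by
        refine Finset.sum_le_sum fun j hj => ?_
        rw [Finset.mem_range] at hj
        exact le_trans (le_abs_self _) (term_bound n j K hn hj)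
    _ ≤ ∑' j : ℕ, 2 / (((j:ℝ)+1))^2 :=
        hsum.sum_le_tsum _ (fun j _ => by positivity)

lemma summable_zsF (n : ℕ) (hn : 1 ≤ n) : Summable (zsF n) := by
  refine summable_of_sum_le (c := ∑' j : ℕ, 2 / (((j:ℝ)+1))^2) (fun a => zsF_nonneg a) (fun s => ?_)
  obtain ⟨K, hK1, hKb⟩ : ∃ K, 1 ≤ K ∧ ∀ a ∈ s, ∑ j, a j < K := by
    refine ⟨1 + s.sup (fun a => ∑ j, a j), Nat.le_add_right 1 _, fun a ha => ?_⟩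
    have h := Finset.le_sup (f := fun a => ∑ j, a j) ha
    exact Nat.lt_one_add_iff.mpr h
  have hsub : s ⊆ zsD n K := fun a ha => mem_zsD.2 (hKb a ha)
  calc ∑ a ∈ s, zsF n a ≤ ∑ a ∈ zsD n K, zsF n a :=
        Finset.sum_le_sum_of_subset_of_nonneg hsub (fun a _ _ => zsF_nonneg a)
    _ = zsR n K := zsT_eq_zsR n K hK1
    _ ≤ ∑' j : ℕ, 2 / (((j:ℝ)+1))^2 := zsR_le n K hn

lemma tendsto_zsT (n : ℕ) (hn : 1 ≤ n) :
    Tendsto (fun K => zsT n K) atTop (𝓝 (zetaStarTwos n)) := by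
  have hs : Summable (zsF n) := summable_zsF n hn
  have hhas : HasSum (zsF n) (zetaStarTwos n) := hs.hasSum
  have hmono : Monotone (zsD n) := by
    intro K L hKL a ha
    rw [mem_zsD] at ha ⊢
    omega
  have hexh : ∀ a : Fin n → ℕ, ∃ K, a ∈ zsD n K :=
    fun a => ⟨∑ j, a j + 1, mem_zsD.2 (by omega)⟩
  exact hhas.comp (tendsto_atTop_finset_of_monotone hmono hexh)

lemma tendsto_zsR (n : ℕ) (hn : 1 ≤ n) :
    Tendsto (fun K => zsR n K) atTop
      (𝓝 (∑' j : ℕ, (-1:ℝ)^j * (2 / ((j+1 : ℕ):ℝ)^(2*n)))) := by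
  set g : ℕ → ℕ → ℝ := fun K j =>
    if j < K then (-1:ℝ)^j * (2 / ((j+1 : ℕ):ℝ)^(2*n)) * zsW K (j+1) else 0 with hg
  have h1 : ∀ K, zsR n K = ∑' j, g K j := by
    intro K
    rw [tsum_eq_sum (s := Finset.range K) (fun j hj => by
      rw [Finset.mem_range] at hj
      simp only [hg, if_neg hj])]
    refine (Finset.sum_congr rfl fun j hj => ?_).symm
    rw [Finset.mem_range] at hj
    simp only [hg, if_pos hj]
  have hDCT := tendsto_tsum_of_dominated_convergence
    (f := g) (g := fun j => (-1:ℝ)^j * (2 / ((j+1 : ℕ):ℝ)^(2*n)))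
    (bound := fun j => 2 / (((j:ℝ)+1))^2) (𝓕 := atTop)
    (by
      have := summable_base.mul_left 2
      refine this.congr fun j => ?_
      rw [mul_one_div])
    (by
      intro j
      have hev : (fun K => (-1:ℝ)^j * (2 / ((j+1 : ℕ):ℝ)^(2*n)) * zsW K (j+1))
          =ᶠ[atTop] (fun K => g K j) := by
        filter_upwards [eventually_gt_atTop j] with K hK
        simp only [hg, if_pos hK]
      have hl : Tendsto (fun K => (-1:ℝ)^j * (2 / ((j+1 : ℕ):ℝ)^(2*n)) * zsW K (j+1))
          atTop (𝓝 ((-1:ℝ)^j * (2 / ((j+1 : ℕ):ℝ)^(2*n)) * 1)) :=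
        Tendsto.const_mul _ (zsW_tendsto (j+1))
      rw [mul_one] at hl
      exact Tendsto.congr' hev hl)
    (by
      filter_upwards with K
      intro j
      by_cases hjK : j < K
      · simp only [hg, if_pos hjK, Real.norm_eq_abs]
        exact term_bound n j K hn hjK
      · simp only [hg, if_neg hjK, Real.norm_eq_abs, abs_zero]
        positivity)
  refine Tendsto.congr (fun K => (h1 K).symm) hDCT

set_option maxHeartbeats 1000000 in
lemma eta_eval (n : ℕ) (hn : 1 ≤ n) :
    ∑' j : ℕ, (-1:ℝ)^j * (2 / ((j+1 : ℕ):ℝ)^(2*n))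
      = (2 - (2:ℝ)^((2:ℤ) - 2*n)) * zetaVal (2*n) := by
  have hg : Summable (fun j : ℕ => 1 / ((j:ℝ)+1)^(2*n)) := by
    have h := Real.summable_one_div_nat_pow (p := 2*n) |>.mpr (by omega)
    have h2 := (summable_nat_add_iff (f := fun m : ℕ => 1 / (m:ℝ)^(2*n)) 1).2 h
    exact h2.congr fun j => by push_cast; ring_nf
  have hcongr : ∀ j : ℕ, (-1:ℝ)^j * (2 / ((j+1 : ℕ):ℝ)^(2*n))
      = (-1:ℝ)^j * (2 * (1 / ((j:ℝ)+1)^(2*n))) := by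
    intro j
    push_cast
    ring
  rw [tsum_congr hcongr]
  have hge : Summable (fun k : ℕ => 1 / (((2*k : ℕ):ℝ)+1)^(2*n)) := by
    have := hg.comp_injective (show Function.Injective (fun k : ℕ => 2*k) from fun a b h => by simp only [] at h; omega)
    exact this.congr fun k => rfl
  have hgo : Summable (fun k : ℕ => 1 / (((2*k+1 : ℕ):ℝ)+1)^(2*n)) := by
    have := hg.comp_injective (show Function.Injective (fun k : ℕ => 2*k+1) from fun a b h => by simp only [] at h; omega)
    exact this.congr fun k => rfl
  have hFe : Summable (fun k : ℕ => (-1:ℝ)^(2*k) * (2 * (1 / (((2*k : ℕ):ℝ)+1)^(2*n)))) := by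
    refine (hge.mul_left 2).congr fun k => ?_
    rw [pow_mul]
    norm_num
  have hFo : Summable (fun k : ℕ => (-1:ℝ)^(2*k+1) * (2 * (1 / (((2*k+1 : ℕ):ℝ)+1)^(2*n)))) := by
    refine ((hgo.mul_left 2).neg).congr fun k => ?_
    rw [pow_succ, pow_mul]
    norm_num
  have key1 := tsum_even_add_odd (f := fun j : ℕ => (-1:ℝ)^j * (2 * (1 / ((j:ℝ)+1)^(2*n)))) hFe hFo
  have key2 := tsum_even_add_odd (f := fun j : ℕ => 1 / ((j:ℝ)+1)^(2*n)) hge hgo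
  have hodd_eq : ∀ k : ℕ, 1 / (((2*k+1 : ℕ):ℝ)+1)^(2*n)
      = (1/(2:ℝ)^(2*n)) * (1 / ((k:ℝ)+1)^(2*n)) := by
    intro k
    have e : (((2*k+1 : ℕ):ℝ)+1) = 2*((k:ℝ)+1) := by push_cast; ring
    rw [e, mul_pow]
    simp only [one_div, mul_inv]
  have key3 : ∑' k : ℕ, 1 / (((2*k+1 : ℕ):ℝ)+1)^(2*n)
      = (1/(2:ℝ)^(2*n)) * ∑' j : ℕ, 1 / ((j:ℝ)+1)^(2*n) := by
    rw [tsum_congr hodd_eq, tsum_mul_left]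
  have heven_val : ∑' k : ℕ, (-1:ℝ)^(2*k) * (2 * (1 / (((2*k : ℕ):ℝ)+1)^(2*n)))
      = 2 * ∑' k : ℕ, 1 / (((2*k : ℕ):ℝ)+1)^(2*n) := by
    rw [← tsum_mul_left]
    refine tsum_congr fun k => ?_
    rw [pow_mul]
    norm_num
  have hodd_val : ∑' k : ℕ, (-1:ℝ)^(2*k+1) * (2 * (1 / (((2*k+1 : ℕ):ℝ)+1)^(2*n)))
      = -(2 * ∑' k : ℕ, 1 / (((2*k+1 : ℕ):ℝ)+1)^(2*n)) := by
    rw [← tsum_mul_left, ← tsum_neg]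
    refine tsum_congr fun k => ?_
    rw [pow_succ, pow_mul]
    norm_num
  have hzpow : (2:ℝ)^((2:ℤ) - 2*n) = 4 / (2:ℝ)^(2*n) := by
    have h2 : ((2:ℝ))^((2:ℤ) - 2*(n:ℤ)) = (2:ℝ)^(2:ℤ) / (2:ℝ)^(2*(n:ℤ)) := by
      rw [zpow_sub₀ (two_ne_zero)]
    have e1 : (2*(n:ℤ)) = ((2*n : ℕ) : ℤ) := by push_cast; ring
    rw [h2, e1, zpow_natCast]
    norm_num
  rw [← key1, heven_val, hodd_val, key3, hzpow]
  have key2' : ∑' k : ℕ, 1 / (((2*k : ℕ):ℝ)+1)^(2*n)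
      = (∑' j : ℕ, 1 / ((j:ℝ)+1)^(2*n)) - (1/(2:ℝ)^(2*n)) * ∑' j : ℕ, 1 / ((j:ℝ)+1)^(2*n) := by
    rw [← key3]
    linarith [key2]
  rw [key2', zetaVal]
  have hpow : ((2:ℝ)^(2*n)) ≠ 0 := by positivity
  field_simp
  ring

/-- `ζ*({2}^n) = (2 - 2^{2-2n}) ζ(2n)`. -/
theorem zeta_star_twos_eval (n : ℕ) (hn : 1 ≤ n) :
    zetaStarTwos n = (2 - (2 : ℝ) ^ ((2 : ℤ) - 2 * n)) * zetaVal (2 * n) := by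
  have h1 := tendsto_zsT n hn
  have h2 := tendsto_zsR n hn
  have h2' : Tendsto (fun K => zsT n K) atTop
      (𝓝 (∑' j : ℕ, (-1:ℝ)^j * (2 / ((j+1 : ℕ):ℝ)^(2*n)))) := by
    refine h2.congr' ?_
    filter_upwards [eventually_ge_atTop 1] with K hK
    exact (zsT_eq_zsR n K hK).symm
  have h3 : zetaStarTwos n = ∑' j : ℕ, (-1:ℝ)^j * (2 / ((j+1 : ℕ):ℝ)^(2*n)) :=
    tendsto_nhds_unique h1 h2'
  rw [h3, eta_eval n hn]
end
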